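/- arXiv:2310.12687 — 12 statements merged into one kernel-verified Lean document; each statement's English description precedes it below -/
import Mathlib

section
/- For every Tamari interval-poset ≺ of size n there exist permutations σ and τ of {1,…,n} such that: σ avoids the pattern 312, τ avoids the pattern 132, inv(σ) ⊆ inv(τ), and a permutation μ of {1,…,n} is a linear extension of ≺ if and only if inv(σ) ⊆ inv(μ) ⊆ inv(τ). In particular, the linear extensions of a Tamari interval-poset form a nonempty interval of the right weak order. -/
/-!
A set `S` of pairs `a < b` is the inversion set of a permutation as soon as it is transitive and
co-transitive along increasing triples: then "`x` comes before `y`" (`x < y` with `(x, y) ∉ S`, or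
`y < x` with `(y, x) ∈ S`) is a strict total order on `Fin n`, and listing `Fin n` in that order
gives the permutation. For a Tamari interval-poset `≺`, the decreasing relations
`{(a, b) | a < b, b ≺ a}` and the non-increasing pairs `{(a, b) | a < b, ¬ a ≺ b}` are two such sets,
giving `σ` and `τ`. The two Tamari axioms make the first set avoid 312 and the second avoid 132,
and `μ` is a linear extension exactly when its inversions contain the decreasing relations and
contain no increasing one.
-/

/-- A Tamari interval-poset of size `n`. -/
def IsTamariIntervalPoset (n : ℕ) (r : Fin n → Fin n → Prop) : Prop :=
  IsPartialOrder (Fin n) r ∧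
    (∀ a b c : Fin n, a < b → b < c → r a c → r b c) ∧
    (∀ a b c : Fin n, a < b → b < c → r c a → r b a)

/-- The set of (value) inversions of a permutation `σ` of `{1,…,n}`:
pairs `(a,b)` with `a < b` such that `b` appears before `a` in the
one-line notation of `σ`. -/
def invSet (n : ℕ) (σ : Equiv.Perm (Fin n)) : Set (Fin n × Fin n) :=
  {p | p.1 < p.2 ∧ σ⁻¹ p.2 < σ⁻¹ p.1}

/-- `σ` avoids the pattern 312: no positions `p < q < r` with `σ q < σ r < σ p`. -/
def Avoids312 (n : ℕ) (σ : Equiv.Perm (Fin n)) : Prop :=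
  ¬ ∃ p q r : Fin n, p < q ∧ q < r ∧ σ q < σ r ∧ σ r < σ p

/-- `σ` avoids the pattern 132: no positions `p < q < r` with `σ p < σ r < σ q`. -/
def Avoids132 (n : ℕ) (σ : Equiv.Perm (Fin n)) : Prop :=
  ¬ ∃ p q r : Fin n, p < q ∧ q < r ∧ σ p < σ r ∧ σ r < σ q

/-- `μ` is a linear extension of the relation `r`:
whenever `x ≺ y` with `x ≠ y`, `x` appears before `y` in `μ`. -/
def IsLinearExtension (n : ℕ) (r : Fin n → Fin n → Prop) (μ : Equiv.Perm (Fin n)) : Prop :=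
  ∀ x y : Fin n, r x y → x ≠ y → μ⁻¹ x < μ⁻¹ y

theorem exists_equiv_fin_lt_iff {α : Type*} [Fintype α] {n : ℕ} (h : Fintype.card α = n)
    (r : α → α → Prop) [IsStrictTotalOrder α r] :
    ∃ e : α ≃ Fin n, ∀ x y, e x < e y ↔ r x y := by
  classical
  let := linearOrderOfSTO r
  exact ⟨(Fintype.orderIsoFinOfCardEq α h).symm.toEquiv,
    fun x y => (Fintype.orderIsoFinOfCardEq α h).symm.lt_iff_lt⟩

theorem exists_perm_invSet_eq {n : ℕ} (S : Fin n → Fin n → Prop)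
    (htrans : ∀ a b c, a < b → b < c → S a b → S b c → S a c)
    (hcotrans : ∀ a b c, a < b → b < c → S a c → S a b ∨ S b c) :
    ∃ μ : Equiv.Perm (Fin n), invSet n μ = {p | p.1 < p.2 ∧ S p.1 p.2} := by
  let before : Fin n → Fin n → Prop := fun x y => (x < y ∧ ¬S x y) ∨ (y < x ∧ S y x)
  have : IsStrictTotalOrder (Fin n) before :=
    { irrefl := by grind
      trichotomous := by grind
      trans := by grind }
  obtain ⟨e, he⟩ := exists_equiv_fin_lt_iff (Fintype.card_fin n) before
  refine ⟨e.symm, Set.ext fun ⟨a, b⟩ => ?_⟩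
  simp only [invSet, Equiv.Perm.inv_def, Equiv.symm_symm, he, Set.mem_ofPred_eq]
  grind

-- An occurrence `c … a … b` of 312 has the inversion `(a, c)` but not `(a, b)`.
theorem avoids312_of_invSet {n : ℕ} {σ : Equiv.Perm (Fin n)}
    (h : ∀ a b c, a < b → b < c → (a, c) ∈ invSet n σ → (a, b) ∈ invSet n σ) :
    Avoids312 n σ := by
  rintro ⟨p, q, s, hpq, hqs, hqs', hsp'⟩
  have hsq : σ⁻¹ (σ s) < σ⁻¹ (σ q) := (h _ _ _ hqs' hsp' ⟨hqs'.trans hsp', by simpa using hpq⟩).2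
  exact hqs.not_gt (by simpa using hsq)

-- An occurrence `a … c … b` of 132 has the inversion `(b, c)` but not `(a, c)`.
theorem avoids132_of_invSet {n : ℕ} {σ : Equiv.Perm (Fin n)}
    (h : ∀ a b c, a < b → b < c → (b, c) ∈ invSet n σ → (a, c) ∈ invSet n σ) :
    Avoids132 n σ := by
  rintro ⟨p, q, s, hpq, hqs, hps', hsq'⟩
  have hqp : σ⁻¹ (σ q) < σ⁻¹ (σ p) := (h _ _ _ hps' hsq' ⟨hsq', by simpa using hqs⟩).2
  exact hpq.not_gt (by simpa using hqp)

theorem isLinearExtension_iff {n : ℕ} {r : Fin n → Fin n → Prop} {μ : Equiv.Perm (Fin n)} :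
    IsLinearExtension n r μ ↔
      {p | p.1 < p.2 ∧ r p.2 p.1} ⊆ invSet n μ ∧ invSet n μ ⊆ {p | p.1 < p.2 ∧ ¬r p.1 p.2} := by
  constructor
  · intro hμ
    exact ⟨fun p ⟨hlt, hr⟩ => ⟨hlt, hμ _ _ hr hlt.ne'⟩,
      fun p ⟨hlt, hinv⟩ => ⟨hlt, fun hr => (hμ _ _ hr hlt.ne).not_gt hinv⟩⟩
  · rintro ⟨hdesc, hinc⟩ x y hr hne
    rcases hne.lt_or_gt with hxy | hyx
    · by_contra! hyx'
      exact (hinc (a := (x, y)) ⟨hxy, hyx'.lt_of_ne (μ⁻¹.injective.ne hne.symm)⟩).2 hr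
    · exact (hdesc (a := (y, x)) ⟨hyx, hr⟩).2

/-- For every Tamari interval-poset `r` of size `n` there are permutations `σ`
(avoiding 312) and `τ` (avoiding 132) with `inv(σ) ⊆ inv(τ)` such that the linear
extensions of `r` are exactly the weak-order interval `[σ,τ]`:
`μ` is a linear extension of `r` iff `inv(σ) ⊆ inv(μ) ⊆ inv(τ)`. -/
theorem tamari_interval_poset_linear_extensions (n : ℕ) (r : Fin n → Fin n → Prop)
    (hr : IsTamariIntervalPoset n r) :
    ∃ σ τ : Equiv.Perm (Fin n), Avoids312 n σ ∧ Avoids132 n τ ∧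
      invSet n σ ⊆ invSet n τ ∧
      ∀ μ : Equiv.Perm (Fin n),
        IsLinearExtension n r μ ↔ (invSet n σ ⊆ invSet n μ ∧ invSet n μ ⊆ invSet n τ) := by
  obtain ⟨hpo, hinc, hdec⟩ := hr
  obtain ⟨σ, hσ⟩ := exists_perm_invSet_eq (fun a b => r b a)
    (fun a b c _ _ hba hcb => hpo.trans _ _ _ hcb hba)
    (fun a b c hab hbc hca => .inl (hdec a b c hab hbc hca))
  obtain ⟨τ, hτ⟩ := exists_perm_invSet_eq (fun a b => ¬r a b)
    (fun a b c hab hbc hab' hbc' hac => hbc' (hinc a b c hab hbc hac))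
    (fun a b c _ _ hac => by
      by_contra! h
      exact hac (hpo.trans _ _ _ h.1 h.2))
  refine ⟨σ, τ, avoids312_of_invSet ?_, avoids132_of_invSet ?_, ?_, fun μ => ?_⟩
  · rw [hσ]
    exact fun a b c hab hbc hac => ⟨hab, hdec a b c hab hbc hac.2⟩
  · rw [hτ]
    exact fun a b c hab hbc hbc' => ⟨hab.trans hbc, fun hac => hbc'.2 (hinc a b c hab hbc hac)⟩
  · rw [hσ, hτ]
    exact fun p ⟨hlt, hba⟩ => ⟨hlt, fun hab => hlt.ne (hpo.antisymm _ _ hab hba)⟩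
  · rw [hσ, hτ, isLinearExtension_iff]
end

section
/- If R and S are antisymmetric reflexive binary relations on {1,…,n}, then their weak-order meet M (the reflexive relation with Inc(M) = Inc(R) ∪ Inc(S) and Dec(M) = Dec(R) ∩ Dec(S)) and their weak-order join J (the reflexive relation with Inc(J) = Inc(R) ∩ Inc(S) and Dec(J) = Dec(R) ∪ Dec(S)) are antisymmetric; hence antisymmetric reflexive relations form a sublattice of the weak order on integer relations. -/
/-- The increasing part of an integer relation `R` on `{1,…,n}`. -/
def IncSet (n : ℕ) (R : Fin n → Fin n → Prop) : Set (Fin n × Fin n) :=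
  {p | p.1 < p.2 ∧ R p.1 p.2}

/-- The decreasing part of an integer relation `R` on `{1,…,n}`. -/
def DecSet (n : ℕ) (R : Fin n → Fin n → Prop) : Set (Fin n × Fin n) :=
  {p | p.1 < p.2 ∧ R p.2 p.1}

/-- If `R` and `S` are antisymmetric reflexive relations on `{1,…,n}`, then
their weak-order meet `M` (with `Inc(M) = Inc(R) ∪ Inc(S)` and
`Dec(M) = Dec(R) ∩ Dec(S)`) and their weak-order join `J` (with
`Inc(J) = Inc(R) ∩ Inc(S)` and `Dec(J) = Dec(R) ∪ Dec(S)`) are antisymmetric;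
hence antisymmetric reflexive relations form a sublattice of the weak order
on integer relations. -/
theorem antisymmetric_relations_sublattice (n : ℕ) (R S : Fin n → Fin n → Prop)
    (hRrefl : Reflexive R) (hSrefl : Reflexive S)
    (hRanti : AntiSymmetric R) (hSanti : AntiSymmetric S) :
    (∀ M : Fin n → Fin n → Prop, Reflexive M →
      IncSet n M = IncSet n R ∪ IncSet n S →
      DecSet n M = DecSet n R ∩ DecSet n S →
      AntiSymmetric M) ∧
    (∀ J : Fin n → Fin n → Prop, Reflexive J →
      IncSet n J = IncSet n R ∩ IncSet n S →
      DecSet n J = DecSet n R ∪ DecSet n S →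
      AntiSymmetric J) := by
  constructor
  · intro M _ hInc hDec a b hab hba
    rcases lt_trichotomy a b with h | h | h
    · have h1 : (a, b) ∈ IncSet n M := ⟨h, hab⟩
      have h2 : (a, b) ∈ DecSet n M := ⟨h, hba⟩
      rw [hInc] at h1; rw [hDec] at h2
      rcases h1 with ⟨_, hR⟩ | ⟨_, hS⟩
      · exact hRanti hR h2.1.2
      · exact hSanti hS h2.2.2
    · exact h
    · have h1 : (b, a) ∈ IncSet n M := ⟨h, hba⟩
      have h2 : (b, a) ∈ DecSet n M := ⟨h, hab⟩
      rw [hInc] at h1; rw [hDec] at h2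
      rcases h1 with ⟨_, hR⟩ | ⟨_, hS⟩
      · exact (hRanti hR h2.1.2).symm
      · exact (hSanti hS h2.2.2).symm
  · intro J _ hInc hDec a b hab hba
    rcases lt_trichotomy a b with h | h | h
    · have h1 : (a, b) ∈ IncSet n J := ⟨h, hab⟩
      have h2 : (a, b) ∈ DecSet n J := ⟨h, hba⟩
      rw [hInc] at h1; rw [hDec] at h2
      rcases h2 with ⟨_, hR⟩ | ⟨_, hS⟩
      · exact hRanti h1.1.2 hR
      · exact hSanti h1.2.2 hS
    · exact h
    · have h1 : (b, a) ∈ IncSet n J := ⟨h, hba⟩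
      have h2 : (b, a) ∈ DecSet n J := ⟨h, hab⟩
      rw [hInc] at h1; rw [hDec] at h2
      rcases h2 with ⟨_, hR⟩ | ⟨_, hS⟩
      · exact (hRanti h1.1.2 hR).symm
      · exact (hSanti h1.2.2 hS).symm
end

section
/- For every n, the set of reflexive transitive binary relations on {1,…,n}, ordered by the weak order ⊑, is a lattice: every pair of reflexive transitive relations has a greatest lower bound and a least upper bound within the set of reflexive transitive relations. -/
/-- The weak order on integer relations: `R ⊑ S` iff
`Dec(R) ⊆ Dec(S)` and `Inc(S) ⊆ Inc(R)`. -/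
def WeakLE (n : ℕ) (R S : Fin n → Fin n → Prop) : Prop :=
  DecSet n R ⊆ DecSet n S ∧ IncSet n S ⊆ IncSet n R

section Meet

variable {n : ℕ} (R S : Fin n → Fin n → Prop)

/-- One increasing step in either relation. -/
abbrev Sstep : Fin n → Fin n → Prop := fun a b => a < b ∧ (R a b ∨ S a b)

/-- Transitive closure of the union of the increasing parts. -/
abbrev Irel : Fin n → Fin n → Prop := Relation.TransGen (Sstep R S)

/-- Reflexive transitive closure of the union of the increasing parts. -/
abbrev Prel : Fin n → Fin n → Prop := Relation.ReflTransGen (Sstep R S)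

/-- Decreasing in both relations. -/
abbrev Dboth : Fin n → Fin n → Prop := fun x y => y < x ∧ R x y ∧ S x y

/-- The decreasing part of the meet: `(b,a)` survives the transitive
decreasing deletion. -/
abbrev DecM : Fin n → Fin n → Prop :=
  fun b a => ∀ x y, Prel R S x b → Prel R S a y → y < x → Dboth R S x y

/-- The meet of `R` and `S`. -/
abbrev Mrel : Fin n → Fin n → Prop :=
  fun x y => x = y ∨ Irel R S x y ∨ (y < x ∧ DecM R S x y)

variable {R S}

lemma Irel_lt {x y : Fin n} (h : Irel R S x y) : x < y := by
  induction h with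
  | single h => exact h.1
  | tail _ h ih => exact ih.trans h.1

/-- Key glueing lemma: if `(b,a)` survives the deletion, then any increasing
pair spanning from below `b` to above `a` is in the increasing closure. -/
lemma glue (hRt : Transitive R) (hSt : Transitive S) {a b : Fin n} (hab : a < b)
    (h : DecM R S b a) :
    ∀ u v, Prel R S u b → Prel R S a v → u < v → Irel R S u v := by
  intro u v hub
  induction hub using Relation.ReflTransGen.head_induction_on generalizing v with
  | refl =>
    intro hav
    induction hav with
    | refl => exact fun huv => absurd huv (lt_asymm hab)
    | @tail v' v'' hav' hstep ih =>
      intro huv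
      rcases lt_trichotomy v' b with hlt | rfl | hgt
      · have hd : Dboth R S b v' := h b v' Relation.ReflTransGen.refl hav' hlt
        rcases hstep.2 with hr | hs
        · exact Relation.TransGen.single ⟨huv, Or.inl (hRt hd.2.1 hr)⟩
        · exact Relation.TransGen.single ⟨huv, Or.inr (hSt hd.2.2 hs)⟩
      · exact Relation.TransGen.single hstep
      · exact (ih hgt).tail hstep
  | @head u' c step hcb ih =>
    intro hav huv
    rcases lt_trichotomy c v with hlt | rfl | hgt
    · exact (Relation.TransGen.single step).trans (ih v hav hlt)
    · exact Relation.TransGen.single step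
    · have hd : Dboth R S c v := h c v hcb hav hgt
      rcases step.2 with hr | hs
      · exact Relation.TransGen.single ⟨huv, Or.inl (hRt hr hd.2.1)⟩
      · exact Relation.TransGen.single ⟨huv, Or.inr (hSt hs hd.2.2)⟩

lemma Mrel_trans (hRt : Transitive R) (hSt : Transitive S) : Transitive (Mrel R S) := by
  rintro x y z (rfl | hxy | ⟨hyx, hdxy⟩) hyz
  · exact hyz
  · rcases hyz with rfl | hyz | ⟨hzy, hdyz⟩
    · exact Or.inr (Or.inl hxy)
    · exact Or.inr (Or.inl (hxy.trans hyz))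
    · rcases lt_trichotomy x z with hxz | rfl | hzx
      · exact Or.inr (Or.inl (glue hRt hSt hzy hdyz x z hxy.to_reflTransGen
          Relation.ReflTransGen.refl hxz))
      · exact Or.inl rfl
      · exact Or.inr (Or.inr ⟨hzx, fun x' y' hx' hy' hlt =>
          hdyz x' y' (hx'.trans hxy.to_reflTransGen) hy' hlt⟩)
  · rcases hyz with rfl | hyz | ⟨hzy, hdyz⟩
    · exact Or.inr (Or.inr ⟨hyx, hdxy⟩)
    · rcases lt_trichotomy x z with hxz | rfl | hzx
      · exact Or.inr (Or.inl (glue hRt hSt hyx hdxy x z Relation.ReflTransGen.refl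
          hyz.to_reflTransGen hxz))
      · exact Or.inl rfl
      · exact Or.inr (Or.inr ⟨hzx, fun x' y' hx' hy' hlt =>
          hdxy x' y' hx' (hyz.to_reflTransGen.trans hy') hlt⟩)
    · refine Or.inr (Or.inr ⟨hzy.trans hyx, fun x' y' hx' hy' hlt => ?_⟩)
      rcases lt_trichotomy x' y with hlt' | rfl | hgt'
      · have hI : Irel R S x' y :=
          glue hRt hSt hyx hdxy x' y hx' Relation.ReflTransGen.refl hlt'
        exact hdyz x' y' hI.to_reflTransGen hy' hlt
      · exact hdyz x' y' Relation.ReflTransGen.refl hy' hlt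
      · have hd : Dboth R S x' y := hdxy x' y hx' Relation.ReflTransGen.refl hgt'
        rcases lt_trichotomy y' y with h1 | rfl | h2
        · have hd2 : Dboth R S y y' := hdyz y y' Relation.ReflTransGen.refl hy' h1
          exact ⟨hlt, hRt hd.2.1 hd2.2.1, hSt hd.2.2 hd2.2.2⟩
        · exact hd
        · have hI : Irel R S y y' :=
            glue hRt hSt hzy hdyz y y' Relation.ReflTransGen.refl hy' h2
          exact hdxy x' y' hx' hI.to_reflTransGen hlt

lemma Prel_imp {T : Fin n → Fin n → Prop} (hTr : Reflexive T) (hTt : Transitive T)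
    (hR : IncSet n R ⊆ IncSet n T) (hS : IncSet n S ⊆ IncSet n T) :
    ∀ {x y : Fin n}, Prel R S x y → T x y := by
  intro x y h
  induction h with
  | refl => exact hTr x
  | @tail b c _ hstep ih =>
    rcases hstep.2 with hr | hs
    · have hm : ((b, c) : Fin n × Fin n) ∈ IncSet n R := ⟨hstep.1, hr⟩
      exact hTt ih (hR hm).2
    · have hm : ((b, c) : Fin n × Fin n) ∈ IncSet n S := ⟨hstep.1, hs⟩
      exact hTt ih (hS hm).2

lemma meet_exists (n : ℕ) (R S : Fin n → Fin n → Prop)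
    (hRt : Transitive R) (hSt : Transitive S) :
    ∃ M : Fin n → Fin n → Prop, Reflexive M ∧ Transitive M ∧
      WeakLE n M R ∧ WeakLE n M S ∧
      ∀ T : Fin n → Fin n → Prop, Reflexive T → Transitive T →
        WeakLE n T R → WeakLE n T S → WeakLE n T M := by
  refine ⟨Mrel R S, fun x => Or.inl rfl, Mrel_trans hRt hSt, ?_, ?_, ?_⟩
  · constructor
    · rintro ⟨a, b⟩ ⟨hab, hM⟩
      refine ⟨hab, ?_⟩
      rcases hM with h | h | ⟨_, hd⟩
      · exact absurd h hab.ne'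
      · exact absurd (Irel_lt h) (lt_asymm hab)
      · exact (hd b a Relation.ReflTransGen.refl Relation.ReflTransGen.refl hab).2.1
    · rintro ⟨a, b⟩ ⟨hab, hr⟩
      exact ⟨hab, Or.inr (Or.inl (Relation.TransGen.single ⟨hab, Or.inl hr⟩))⟩
  · constructor
    · rintro ⟨a, b⟩ ⟨hab, hM⟩
      refine ⟨hab, ?_⟩
      rcases hM with h | h | ⟨_, hd⟩
      · exact absurd h hab.ne'
      · exact absurd (Irel_lt h) (lt_asymm hab)
      · exact (hd b a Relation.ReflTransGen.refl Relation.ReflTransGen.refl hab).2.2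
    · rintro ⟨a, b⟩ ⟨hab, hs⟩
      exact ⟨hab, Or.inr (Or.inl (Relation.TransGen.single ⟨hab, Or.inr hs⟩))⟩
  · rintro T hTr hTt ⟨hTR1, hTR2⟩ ⟨hTS1, hTS2⟩
    have hP : ∀ {x y : Fin n}, Prel R S x y → T x y := Prel_imp hTr hTt hTR2 hTS2
    constructor
    · rintro ⟨a, b⟩ ⟨hab, hT⟩
      refine ⟨hab, Or.inr (Or.inr ⟨hab, fun x y hx hy hlt => ?_⟩)⟩
      have hTxy : T x y := hTt (hTt (hP hx) hT) (hP hy)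
      have hm : ((y, x) : Fin n × Fin n) ∈ DecSet n T := ⟨hlt, hTxy⟩
      exact ⟨hlt, (hTR1 hm).2, (hTS1 hm).2⟩
    · rintro ⟨a, b⟩ ⟨hab, hM⟩
      refine ⟨hab, ?_⟩
      rcases hM with h | h | ⟨h, _⟩
      · exact h ▸ hTr a
      · exact hP h.to_reflTransGen
      · exact absurd hab (lt_asymm h)

end Meet

/-- The reflexive transitive relations on `{1,…,n}`, ordered by the weak
order `⊑`, form a lattice: every pair has a greatest lower bound and a least
upper bound within the set of reflexive transitive relations. -/
theorem transitive_relations_weak_order_lattice (n : ℕ)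
    (R S : Fin n → Fin n → Prop)
    (hRrefl : Reflexive R) (hRtrans : Transitive R)
    (hSrefl : Reflexive S) (hStrans : Transitive S) :
    (∃ M : Fin n → Fin n → Prop, Reflexive M ∧ Transitive M ∧
      WeakLE n M R ∧ WeakLE n M S ∧
      ∀ T : Fin n → Fin n → Prop, Reflexive T → Transitive T →
        WeakLE n T R → WeakLE n T S → WeakLE n T M) ∧
    (∃ J : Fin n → Fin n → Prop, Reflexive J ∧ Transitive J ∧
      WeakLE n R J ∧ WeakLE n S J ∧
      ∀ T : Fin n → Fin n → Prop, Reflexive T → Transitive T →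
        WeakLE n R T → WeakLE n S T → WeakLE n J T) := by
  constructor
  · exact meet_exists n R S hRtrans hStrans
  · obtain ⟨M', hM'r, hM't, hM'R, hM'S, hM'max⟩ :=
      meet_exists n (flip R) (flip S)
        (fun a b c h1 h2 => hRtrans h2 h1) (fun a b c h1 h2 => hStrans h2 h1)
    refine ⟨flip M', fun x => hM'r x, fun a b c h1 h2 => hM't h2 h1,
      ⟨hM'R.2, hM'R.1⟩, ⟨hM'S.2, hM'S.1⟩, fun T hTr hTt hRT hST => ?_⟩
    have h := hM'max (flip T) (fun x => hTr x) (fun a b c h1 h2 => hTt h2 h1)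
      ⟨hRT.2, hRT.1⟩ ⟨hST.2, hST.1⟩
    exact ⟨h.2, h.1⟩
end

section
/- For every n, the set of partial orders on {1,…,n} (integer posets), ordered by the weak order ⊑ (P ⊑ Q iff Dec(P) ⊆ Dec(Q) and Inc(Q) ⊆ Inc(P)), is a lattice: every pair of partial orders on {1,…,n} has a greatest lower bound and a least upper bound within the set of partial orders on {1,…,n}. -/
namespace IntPosetAux

variable {n : ℕ}

/-- Union of the increasing parts of `P` and `Q`. -/
def U (P Q : Fin n → Fin n → Prop) (a b : Fin n) : Prop :=
  a < b ∧ (P a b ∨ Q a b)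

/-- Transitive closure of the union of the increasing parts. -/
abbrev TG (P Q : Fin n → Fin n → Prop) : Fin n → Fin n → Prop :=
  Relation.TransGen (U P Q)

abbrev RTG (P Q : Fin n → Fin n → Prop) : Fin n → Fin n → Prop :=
  Relation.ReflTransGen (U P Q)

lemma tg_lt {P Q : Fin n → Fin n → Prop} {a b : Fin n} (h : TG P Q a b) : a < b := by
  induction h with
  | single h => exact h.1
  | tail _ h ih => exact ih.trans h.1

lemma rtg_cases {P Q : Fin n → Fin n → Prop} {a b : Fin n} (h : RTG P Q a b) :
    a = b ∨ TG P Q a b := by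
  rcases Relation.reflTransGen_iff_eq_or_transGen.mp h with h | h
  · exact Or.inl h.symm
  · exact Or.inr h

lemma rtg_tg {P Q : Fin n → Fin n → Prop} {a b : Fin n} (h : RTG P Q a b) (hne : a ≠ b) :
    TG P Q a b := by
  rcases rtg_cases h with h | h
  · exact absurd h hne
  · exact h

/-- Crossing lemma: a chain from `x` to `y` passing the level `t` either hits `t`
or has a step jumping over `t`. -/
lemma cross {P Q : Fin n → Fin n → Prop} {x y : Fin n} (h : TG P Q x y) :
    ∀ t : Fin n, x < t → t < y →
      ∃ c d, RTG P Q x c ∧ U P Q c d ∧ RTG P Q d y ∧ c ≤ t ∧ t ≤ d := by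
  induction h with
  | single h =>
    intro t h1 h2
    exact ⟨x, _, Relation.ReflTransGen.refl, h, Relation.ReflTransGen.refl, h1.le, h2.le⟩
  | @tail b y hxb hby ih =>
    intro t h1 h2
    by_cases hb : t < b
    · obtain ⟨c, d, g1, g2, g3, g4, g5⟩ := ih t h1 hb
      exact ⟨c, d, g1, g2, g3.tail hby, g4, g5⟩
    · push_neg at hb
      exact ⟨b, y, hxb.to_reflTransGen, hby, Relation.ReflTransGen.refl, hb, h2.le⟩

/-- The decreasing part of the meet: pairs `(a,b)`, `a < b`, such that any pair
`(p,q)` with `a ⤳ p`, `q ⤳ b`, `p < q`, is decreasing in both `P` and `Q`. -/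
def DecM (P Q : Fin n → Fin n → Prop) (a b : Fin n) : Prop :=
  a < b ∧ ∀ p q : Fin n, RTG P Q a p → RTG P Q q b → p < q → P q p ∧ Q q p

/-- The meet of `P` and `Q` in the weak order. -/
def M (P Q : Fin n → Fin n → Prop) (x y : Fin n) : Prop :=
  x = y ∨ TG P Q x y ∨ DecM P Q y x

section Meet

variable {P Q : Fin n → Fin n → Prop}
variable (hP : IsPartialOrder (Fin n) P) (hQ : IsPartialOrder (Fin n) Q)

lemma decM_PQ {a b : Fin n} (h : DecM P Q a b) : P b a ∧ Q b a :=
  h.2 a b Relation.ReflTransGen.refl Relation.ReflTransGen.refl h.1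

include hP hQ in
lemma decM_not_tg {a b : Fin n} (h : DecM P Q a b) : ¬ TG P Q a b := by
  intro htg
  cases htg with
  | single hU =>
    obtain ⟨hPba, hQba⟩ := h.2 a b Relation.ReflTransGen.refl Relation.ReflTransGen.refl hU.1
    rcases hU.2 with hu | hu
    · exact absurd (hP.antisymm a b hu hPba) hU.1.ne
    · exact absurd (hQ.antisymm a b hu hQba) hU.1.ne
  | @tail c _ htc hU =>
    obtain ⟨hPbc, hQbc⟩ := h.2 c b htc.to_reflTransGen Relation.ReflTransGen.refl hU.1
    rcases hU.2 with hu | hu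
    · exact absurd (hP.antisymm c b hu hPbc) hU.1.ne
    · exact absurd (hQ.antisymm c b hu hQbc) hU.1.ne

include hP hQ in
lemma splice_up {u v w : Fin n} (hD : DecM P Q w v) (hI : TG P Q u v) (huw : u < w) :
    TG P Q u w := by
  obtain ⟨c, d, h1, h2, h3, h4, h5⟩ := cross hI w huw hD.1
  rcases eq_or_lt_of_le h4 with hc | hc
  · exact rtg_tg (hc ▸ h1) huw.ne
  · rcases eq_or_lt_of_le h5 with hd | hd
    · exact Relation.TransGen.tail' h1 (hd ▸ h2)
    · obtain ⟨hPdw, hQdw⟩ := hD.2 w d Relation.ReflTransGen.refl h3 hd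
      rcases h2.2 with hu | hu
      · exact Relation.TransGen.tail' h1 ⟨hc, Or.inl (hP.trans c d w hu hPdw)⟩
      · exact Relation.TransGen.tail' h1 ⟨hc, Or.inr (hQ.trans c d w hu hQdw)⟩

include hP hQ in
lemma splice_down {u v w : Fin n} (hD : DecM P Q v u) (hI : TG P Q v w) (huw : u < w) :
    TG P Q u w := by
  obtain ⟨c, d, h1, h2, h3, h4, h5⟩ := cross hI u hD.1 huw
  rcases eq_or_lt_of_le h5 with hd | hd
  · exact rtg_tg (hd ▸ h3 : RTG P Q u w) huw.ne
  · rcases eq_or_lt_of_le h4 with hc | hc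
    · exact Relation.TransGen.head' (hc ▸ h2) h3
    · obtain ⟨hPuc, hQuc⟩ := hD.2 c u h1 Relation.ReflTransGen.refl hc
      rcases h2.2 with hu | hu
      · exact Relation.TransGen.head' ⟨hd, Or.inl (hP.trans u c d hPuc hu)⟩ h3
      · exact Relation.TransGen.head' ⟨hd, Or.inr (hQ.trans u c d hQuc hu)⟩ h3

include hP hQ in
lemma decM_trans {u v w : Fin n} (h1 : DecM P Q w v) (h2 : DecM P Q v u) :
    DecM P Q w u := by
  refine ⟨h1.1.trans h2.1, fun p q hp hq hpq => ?_⟩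
  rcases lt_trichotomy p v with hpv | hpv | hpv
  · rcases lt_trichotomy q v with hqv | hqv | hqv
    · -- q < v : derive RTG q v
      have hqu : q < u := hqv.trans h2.1
      have htq : TG P Q q u := rtg_tg hq hqu.ne
      obtain ⟨c, d, g1, g2, g3, g4, g5⟩ := cross htq v hqv h2.1
      rcases eq_or_lt_of_le g4 with gc | gc
      · exact h1.2 p q hp (gc ▸ g1) hpq
      · rcases eq_or_lt_of_le g5 with gd | gd
        · exact absurd (rtg_tg (gd ▸ g3 : RTG P Q v u) h2.1.ne) (decM_not_tg hP hQ h2)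
        · obtain ⟨hPdv, hQdv⟩ := h2.2 v d Relation.ReflTransGen.refl g3 gd
          rcases g2.2 with gu | gu
          · exact h1.2 p q hp (g1.tail ⟨gc, Or.inl (hP.trans c d v gu hPdv)⟩) hpq
          · exact h1.2 p q hp (g1.tail ⟨gc, Or.inr (hQ.trans c d v gu hQdv)⟩) hpq
    · exact hqv ▸ h1.2 p q hp (hqv ▸ Relation.ReflTransGen.refl) hpq
    · obtain ⟨hPvp, hQvp⟩ := h1.2 p v hp Relation.ReflTransGen.refl hpv
      obtain ⟨hPqv, hQqv⟩ := h2.2 v q Relation.ReflTransGen.refl hq hqv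
      exact ⟨hP.trans q v p hPqv hPvp, hQ.trans q v p hQqv hQvp⟩
  · exact h2.2 p q (hpv ▸ Relation.ReflTransGen.refl) hq hpq
  · -- v < p : derive RTG v p
    have hwp : w < p := h1.1.trans hpv
    have htp : TG P Q w p := rtg_tg hp hwp.ne
    obtain ⟨c, d, g1, g2, g3, g4, g5⟩ := cross htp v h1.1 hpv
    rcases eq_or_lt_of_le g4 with gc | gc
    · exact absurd (rtg_tg (gc ▸ g1 : RTG P Q w v) h1.1.ne) (decM_not_tg hP hQ h1)
    · rcases eq_or_lt_of_le g5 with gd | gd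
      · exact h2.2 p q (gd ▸ g3) hq hpq
      · obtain ⟨hPvc, hQvc⟩ := h1.2 c v g1 Relation.ReflTransGen.refl gc
        rcases g2.2 with gu | gu
        · exact h2.2 p q (Relation.ReflTransGen.head ⟨gd, Or.inl (hP.trans v c d hPvc gu)⟩ g3) hq hpq
        · exact h2.2 p q (Relation.ReflTransGen.head ⟨gd, Or.inr (hQ.trans v c d hQvc gu)⟩ g3) hq hpq

include hP hQ in
lemma M_po : IsPartialOrder (Fin n) (M P Q) := by
  refine { refl := fun a => Or.inl rfl, trans := ?_, antisymm := ?_ }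
  · rintro u v w (rfl | huv | huv) hvw
    · exact hvw
    · rcases hvw with rfl | hvw | hvw
      · exact Or.inr (Or.inl huv)
      · exact Or.inr (Or.inl (huv.trans hvw))
      · rcases lt_trichotomy u w with h | h | h
        · exact Or.inr (Or.inl (splice_up hP hQ hvw huv h))
        · exact Or.inl h
        · exact Or.inr (Or.inr ⟨h, fun p q hp hq hpq =>
            hvw.2 p q hp (hq.trans huv.to_reflTransGen) hpq⟩)
    · rcases hvw with rfl | hvw | hvw
      · exact Or.inr (Or.inr huv)
      · rcases lt_trichotomy u w with h | h | h
        · exact Or.inr (Or.inl (splice_down hP hQ huv hvw h))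
        · exact Or.inl h
        · exact Or.inr (Or.inr ⟨h, fun p q hp hq hpq =>
            huv.2 p q (hvw.to_reflTransGen.trans hp) hq hpq⟩)
      · exact Or.inr (Or.inr (decM_trans hP hQ hvw huv))
  · rintro a b (rfl | hab | hab) hba
    · rfl
    · rcases hba with rfl | hba | hba
      · rfl
      · exact absurd (tg_lt hab) (tg_lt hba).asymm
      · exact absurd hab (decM_not_tg hP hQ hba)
    · rcases hba with rfl | hba | hba
      · rfl
      · exact absurd hba (decM_not_tg hP hQ hab)
      · exact absurd hab.1 hba.1.asymm

lemma M_le_left : WeakLE n (M P Q) P := by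
  constructor
  · rintro ⟨a, b⟩ ⟨hab, hM⟩
    rcases hM with h | h | h
    · exact absurd h hab.ne'
    · exact absurd (tg_lt h) hab.asymm
    · exact ⟨hab, (decM_PQ h).1⟩
  · rintro ⟨a, b⟩ ⟨hab, hPab⟩
    exact ⟨hab, Or.inr (Or.inl (Relation.TransGen.single ⟨hab, Or.inl hPab⟩))⟩

lemma M_le_right : WeakLE n (M P Q) Q := by
  constructor
  · rintro ⟨a, b⟩ ⟨hab, hM⟩
    rcases hM with h | h | h
    · exact absurd h hab.ne'
    · exact absurd (tg_lt h) hab.asymm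
    · exact ⟨hab, (decM_PQ h).2⟩
  · rintro ⟨a, b⟩ ⟨hab, hQab⟩
    exact ⟨hab, Or.inr (Or.inl (Relation.TransGen.single ⟨hab, Or.inr hQab⟩))⟩

lemma le_M {T : Fin n → Fin n → Prop} (hT : IsPartialOrder (Fin n) T)
    (hTP : WeakLE n T P) (hTQ : WeakLE n T Q) : WeakLE n T (M P Q) := by
  have rtgT : ∀ a b : Fin n, RTG P Q a b → T a b := by
    intro a b h
    induction h with
    | refl => exact hT.refl a
    | @tail c d hac hcd ih =>
      refine hT.trans a c d ih ?_
      rcases hcd.2 with hu | hu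
      · exact (hTP.2 (show (c, d) ∈ IncSet n P from ⟨hcd.1, hu⟩)).2
      · exact (hTQ.2 (show (c, d) ∈ IncSet n Q from ⟨hcd.1, hu⟩)).2
  constructor
  · rintro ⟨a, b⟩ ⟨hab, hTba⟩
    refine ⟨hab, Or.inr (Or.inr ⟨hab, fun p q hp hq hpq => ?_⟩)⟩
    have hqp : T q p := hT.trans q a p (hT.trans q b a (rtgT q b hq) hTba) (rtgT a p hp)
    exact ⟨(hTP.1 (show (p, q) ∈ DecSet n T from ⟨hpq, hqp⟩)).2,
           (hTQ.1 (show (p, q) ∈ DecSet n T from ⟨hpq, hqp⟩)).2⟩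
  · rintro ⟨a, b⟩ ⟨hab, hM⟩
    rcases hM with h | h | h
    · exact absurd h hab.ne
    · exact ⟨hab, rtgT a b h.to_reflTransGen⟩
    · exact absurd h.1 hab.asymm

include hP hQ in
lemma meet_exists : ∃ M' : Fin n → Fin n → Prop, IsPartialOrder (Fin n) M' ∧
    WeakLE n M' P ∧ WeakLE n M' Q ∧
    ∀ T : Fin n → Fin n → Prop, IsPartialOrder (Fin n) T →
      WeakLE n T P → WeakLE n T Q → WeakLE n T M' :=
  ⟨M P Q, M_po hP hQ, M_le_left, M_le_right, fun _ hT hTP hTQ => le_M hT hTP hTQ⟩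

end Meet

/-- The order-reversing symmetry. -/
def Rev (R : Fin n → Fin n → Prop) (a b : Fin n) : Prop := R a.rev b.rev

lemma rev_rev (R : Fin n → Fin n → Prop) : Rev (Rev R) = R := by
  funext a b
  simp [Rev, Fin.rev_rev]

lemma rev_po {R : Fin n → Fin n → Prop} (h : IsPartialOrder (Fin n) R) :
    IsPartialOrder (Fin n) (Rev R) := by
  refine { refl := fun a => h.refl a.rev,
           trans := fun a b c h1 h2 => h.trans _ _ _ h1 h2,
           antisymm := fun a b h1 h2 => ?_ }
  have := h.antisymm _ _ h1 h2
  simpa [Fin.rev_inj] using this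

lemma rev_weakLE {R S : Fin n → Fin n → Prop} (h : WeakLE n R S) :
    WeakLE n (Rev S) (Rev R) := by
  constructor
  · rintro ⟨a, b⟩ ⟨hab, hS⟩
    have : (b.rev, a.rev) ∈ IncSet n S := ⟨Fin.rev_lt_rev.mpr hab, hS⟩
    exact ⟨hab, (h.2 this).2⟩
  · rintro ⟨a, b⟩ ⟨hab, hR⟩
    have : (b.rev, a.rev) ∈ DecSet n R := ⟨Fin.rev_lt_rev.mpr hab, hR⟩
    exact ⟨hab, (h.1 this).2⟩

lemma rev_weakLE_iff {R S : Fin n → Fin n → Prop} :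
    WeakLE n (Rev S) (Rev R) ↔ WeakLE n R S := by
  constructor
  · intro h
    have := rev_weakLE h
    rwa [rev_rev, rev_rev] at this
  · exact rev_weakLE

end IntPosetAux

/-- The integer posets (partial orders on `{1,…,n}`), ordered by the weak
order `⊑`, form a lattice: every pair has a greatest lower bound and a least
upper bound within the set of partial orders on `{1,…,n}`. -/
theorem integer_posets_weak_order_lattice (n : ℕ)
    (P Q : Fin n → Fin n → Prop)
    (hP : IsPartialOrder (Fin n) P) (hQ : IsPartialOrder (Fin n) Q) :
    (∃ M : Fin n → Fin n → Prop, IsPartialOrder (Fin n) M ∧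
      WeakLE n M P ∧ WeakLE n M Q ∧
      ∀ T : Fin n → Fin n → Prop, IsPartialOrder (Fin n) T →
        WeakLE n T P → WeakLE n T Q → WeakLE n T M) ∧
    (∃ J : Fin n → Fin n → Prop, IsPartialOrder (Fin n) J ∧
      WeakLE n P J ∧ WeakLE n Q J ∧
      ∀ T : Fin n → Fin n → Prop, IsPartialOrder (Fin n) T →
        WeakLE n P T → WeakLE n Q T → WeakLE n J T) := by
  open IntPosetAux in
  refine ⟨meet_exists hP hQ, ?_⟩
  obtain ⟨M', hM'po, hM'P, hM'Q, hM'max⟩ :=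
    IntPosetAux.meet_exists (IntPosetAux.rev_po hP) (IntPosetAux.rev_po hQ)
  refine ⟨IntPosetAux.Rev M', IntPosetAux.rev_po hM'po, ?_, ?_, ?_⟩
  · have := IntPosetAux.rev_weakLE hM'P
    rwa [IntPosetAux.rev_rev] at this
  · have := IntPosetAux.rev_weakLE hM'Q
    rwa [IntPosetAux.rev_rev] at this
  · intro T hT hPT hQT
    have h1 : WeakLE n (IntPosetAux.Rev T) (IntPosetAux.Rev P) := IntPosetAux.rev_weakLE hPT
    have h2 : WeakLE n (IntPosetAux.Rev T) (IntPosetAux.Rev Q) := IntPosetAux.rev_weakLE hQT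
    have h3 := hM'max _ (IntPosetAux.rev_po hT) h1 h2
    have := IntPosetAux.rev_weakLE h3
    rwa [IntPosetAux.rev_rev] at this
end

section
/- For every n, the set of total (linear) orders on {1,…,n} is a sublattice of the lattice of integer posets: if L and L' are total orders on {1,…,n}, then the greatest lower bound and the least upper bound of {L, L'} taken in the weak order ⊑ among all partial orders on {1,…,n} are themselves total orders. (Under the identification of a permutation with the total order it induces, this realizes the classical weak order on the symmetric group as a sublattice of the lattice of integer posets.) -/
open Relation

section Aux

variable {n : ℕ}

lemma tg_lt {r : Fin n → Fin n → Prop} (hlt : ∀ x y, r x y → x < y)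
    {x y : Fin n} (h : TransGen r x y) : x < y := by
  induction h with
  | single h => exact hlt _ _ h
  | tail _ h ih => exact ih.trans (hlt _ _ h)

lemma tg_split {r : Fin n → Fin n → Prop}
    (hsplit : ∀ x y z, r x z → x < y → y < z → r x y ∨ r y z)
    {x z : Fin n} (h : TransGen r x z) :
    ∀ y, x < y → y < z → TransGen r x y ∨ TransGen r y z := by
  induction h with
  | single h =>
    intro y h1 h2
    rcases hsplit _ _ _ h h1 h2 with h' | h'
    · exact Or.inl (TransGen.single h')
    · exact Or.inr (TransGen.single h')
  | @tail w z hxw hwz ih =>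
    intro y h1 h2
    rcases lt_trichotomy y w with hyw | rfl | hwy
    · rcases ih y h1 hyw with h' | h'
      · exact Or.inl h'
      · exact Or.inr (h'.tail hwz)
    · exact Or.inl hxw
    · rcases hsplit _ _ _ hwz hwy h2 with h' | h'
      · exact Or.inl (hxw.tail h')
      · exact Or.inr (TransGen.single h')

/-- The candidate total order built from a "increasing-chain" relation `r`. -/
def TCrel (r : Fin n → Fin n → Prop) (a b : Fin n) : Prop :=
  a = b ∨ (a < b ∧ TransGen r a b) ∨ (b < a ∧ ¬ TransGen r b a)

lemma TCrel_linear {r : Fin n → Fin n → Prop} (hlt : ∀ x y, r x y → x < y)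
    (hsplit : ∀ x y z, r x z → x < y → y < z → r x y ∨ r y z) :
    IsLinearOrder (Fin n) (TCrel r) := by
  refine { refl := fun a => Or.inl rfl, trans := ?_, antisymm := ?_, total := ?_ }
  · intro a b c hab hbc
    rcases hab with rfl | ⟨h1, p1⟩ | ⟨h1, p1⟩
    · exact hbc
    · rcases hbc with rfl | ⟨h2, p2⟩ | ⟨h2, p2⟩
      · exact Or.inr (Or.inl ⟨h1, p1⟩)
      · exact Or.inr (Or.inl ⟨h1.trans h2, p1.trans p2⟩)
      · -- a < b, C* a b ; c < b, ¬ C* c b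
        rcases lt_trichotomy a c with hac | rfl | hca
        · refine Or.inr (Or.inl ⟨hac, ?_⟩)
          rcases tg_split hsplit p1 c hac h2 with h' | h'
          · exact h'
          · exact absurd h' p2
        · exact Or.inl rfl
        · refine Or.inr (Or.inr ⟨hca, fun h => p2 (h.trans p1)⟩)
    · rcases hbc with rfl | ⟨h2, p2⟩ | ⟨h2, p2⟩
      · exact Or.inr (Or.inr ⟨h1, p1⟩)
      · -- b < a, ¬ C* b a ; b < c, C* b c
        rcases lt_trichotomy a c with hac | rfl | hca
        · refine Or.inr (Or.inl ⟨hac, ?_⟩)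
          rcases tg_split hsplit p2 a h1 hac with h' | h'
          · exact absurd h' p1
          · exact h'
        · exact Or.inl rfl
        · exact Or.inr (Or.inr ⟨hca, fun h => p1 (p2.trans h)⟩)
      · -- b < a, ¬ C* b a ; c < b, ¬ C* c b
        refine Or.inr (Or.inr ⟨h2.trans h1, fun h => ?_⟩)
        rcases tg_split hsplit h b h2 h1 with h' | h'
        · exact p2 h'
        · exact p1 h'
  · intro a b hab hba
    rcases hab with rfl | ⟨h1, p1⟩ | ⟨h1, p1⟩
    · rfl
    · rcases hba with rfl | ⟨h2, p2⟩ | ⟨h2, p2⟩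
      · rfl
      · exact absurd h2 (lt_asymm h1)
      · exact absurd p1 p2
    · rcases hba with rfl | ⟨h2, p2⟩ | ⟨h2, p2⟩
      · rfl
      · exact absurd p2 p1
      · exact absurd h2 (lt_asymm h1)
  · intro a b
    rcases lt_trichotomy a b with h | rfl | h
    · by_cases hc : TransGen r a b
      · exact Or.inl (Or.inr (Or.inl ⟨h, hc⟩))
      · exact Or.inr (Or.inr (Or.inr ⟨h, hc⟩))
    · exact Or.inl (Or.inl rfl)
    · by_cases hc : TransGen r b a
      · exact Or.inr (Or.inr (Or.inl ⟨h, hc⟩))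
      · exact Or.inl (Or.inr (Or.inr ⟨h, hc⟩))

lemma linear_flip {α : Type*} {r : α → α → Prop} (h : IsLinearOrder α r) :
    IsLinearOrder α (fun a b => r b a) :=
  { refl := fun a => h.refl a
    trans := fun a b c h1 h2 => h.trans _ _ _ h2 h1
    antisymm := fun a b h1 h2 => h.antisymm _ _ h2 h1
    total := fun a b => (h.total b a) }

end Aux

/-- Total (linear) orders on `{1,…,n}` form a sublattice of the lattice of
integer posets: for total orders `L, L'`, any greatest lower bound and any
least upper bound of `{L, L'}` taken in the weak order `⊑` among all partial
orders on `{1,…,n}` is again a total order. -/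
theorem total_orders_sublattice_of_integer_posets (n : ℕ)
    (L L' : Fin n → Fin n → Prop)
    (hL : IsLinearOrder (Fin n) L) (hL' : IsLinearOrder (Fin n) L') :
    (∀ M : Fin n → Fin n → Prop, IsPartialOrder (Fin n) M →
      WeakLE n M L → WeakLE n M L' →
      (∀ T : Fin n → Fin n → Prop, IsPartialOrder (Fin n) T →
        WeakLE n T L → WeakLE n T L' → WeakLE n T M) →
      IsLinearOrder (Fin n) M) ∧
    (∀ J : Fin n → Fin n → Prop, IsPartialOrder (Fin n) J →
      WeakLE n L J → WeakLE n L' J →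
      (∀ T : Fin n → Fin n → Prop, IsPartialOrder (Fin n) T →
        WeakLE n L T → WeakLE n L' T → WeakLE n J T) →
      IsLinearOrder (Fin n) J) := by
  constructor
  · -- meet
    intro M hM hML hML' hglb
    set c : Fin n → Fin n → Prop := fun a b => a < b ∧ (L a b ∨ L' a b) with hc
    have hlt : ∀ x y, c x y → x < y := fun x y h => h.1
    have hsplit : ∀ x y z, c x z → x < y → y < z → c x y ∨ c y z := by
      rintro x y z ⟨hxz, h⟩ h1 h2
      rcases h with h | h
      · by_cases hxy : L x y
        · exact Or.inl ⟨h1, Or.inl hxy⟩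
        · exact Or.inr ⟨h2, Or.inl (hL.trans _ _ _ ((hL.total x y).resolve_left hxy) h)⟩
      · by_cases hxy : L' x y
        · exact Or.inl ⟨h1, Or.inr hxy⟩
        · exact Or.inr ⟨h2, Or.inr (hL'.trans _ _ _ ((hL'.total x y).resolve_left hxy) h)⟩
    have hT : IsLinearOrder (Fin n) (TCrel c) := TCrel_linear hlt hsplit
    -- ¬ TransGen c a b implies both L b a and L' b a (for a < b)
    have hnc : ∀ a b : Fin n, a < b → ¬ Relation.TransGen c a b → L b a ∧ L' b a := by
      intro a b hab h
      have h' : ¬ (L a b ∨ L' a b) := fun hor => h (Relation.TransGen.single ⟨hab, hor⟩)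
      exact ⟨(hL.total a b).resolve_left (fun x => h' (Or.inl x)),
             (hL'.total a b).resolve_left (fun x => h' (Or.inr x))⟩
    -- TCrel c is a lower bound of L
    have hTL : WeakLE n (TCrel c) L := by
      constructor
      · rintro ⟨a, b⟩ ⟨hab, hTba⟩
        rcases hTba with h | ⟨h, _⟩ | ⟨_, hn⟩
        · exact absurd h (ne_of_gt hab)
        · exact absurd h (lt_asymm hab)
        · exact ⟨hab, (hnc a b hab hn).1⟩
      · rintro ⟨a, b⟩ ⟨hab, hLab⟩
        exact ⟨hab, Or.inr (Or.inl ⟨hab, Relation.TransGen.single ⟨hab, Or.inl hLab⟩⟩)⟩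
    have hTL' : WeakLE n (TCrel c) L' := by
      constructor
      · rintro ⟨a, b⟩ ⟨hab, hTba⟩
        rcases hTba with h | ⟨h, _⟩ | ⟨_, hn⟩
        · exact absurd h (ne_of_gt hab)
        · exact absurd h (lt_asymm hab)
        · exact ⟨hab, (hnc a b hab hn).2⟩
      · rintro ⟨a, b⟩ ⟨hab, hLab⟩
        exact ⟨hab, Or.inr (Or.inl ⟨hab, Relation.TransGen.single ⟨hab, Or.inr hLab⟩⟩)⟩
    have hTM : WeakLE n (TCrel c) M :=
      hglb (TCrel c) { refl := hT.refl, trans := hT.trans, antisymm := hT.antisymm } hTL hTL'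
    -- M contains all TransGen c pairs increasingly
    have incM : ∀ x y : Fin n, x < y → L x y ∨ L' x y → M x y := by
      rintro x y h1 (h2 | h2)
      · exact (hML.2 (show (x, y) ∈ IncSet n L from ⟨h1, h2⟩)).2
      · exact (hML'.2 (show (x, y) ∈ IncSet n L' from ⟨h1, h2⟩)).2
    have hmono : ∀ x y : Fin n, Relation.TransGen c x y → M x y := by
      intro x y h
      induction h with
      | single h => exact incM _ _ h.1 h.2
      | @tail w z hxw hwz ih => exact hM.trans _ _ _ ih (incM _ _ hwz.1 hwz.2)
    refine { hM with total := ?_ }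
    intro a b
    rcases lt_trichotomy a b with h | rfl | h
    · by_cases htg : Relation.TransGen c a b
      · exact Or.inl (hmono _ _ htg)
      · exact Or.inr (hTM.1 (show (a, b) ∈ DecSet n (TCrel c) from ⟨h, Or.inr (Or.inr ⟨h, htg⟩)⟩)).2
    · exact Or.inl (hM.refl a)
    · by_cases htg : Relation.TransGen c b a
      · exact Or.inr (hmono _ _ htg)
      · exact Or.inl (hTM.1 (show (b, a) ∈ DecSet n (TCrel c) from ⟨h, Or.inr (Or.inr ⟨h, htg⟩)⟩)).2
  · -- join
    intro J hJ hLJ hL'J hlub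
    set c : Fin n → Fin n → Prop := fun a b => a < b ∧ (L b a ∨ L' b a) with hc
    have hlt : ∀ x y, c x y → x < y := fun x y h => h.1
    have hsplit : ∀ x y z, c x z → x < y → y < z → c x y ∨ c y z := by
      rintro x y z ⟨hxz, h⟩ h1 h2
      rcases h with h | h
      · by_cases hzy : L z y
        · exact Or.inr ⟨h2, Or.inl hzy⟩
        · exact Or.inl ⟨h1, Or.inl (hL.trans _ _ _ ((hL.total z y).resolve_left hzy) h)⟩
      · by_cases hzy : L' z y
        · exact Or.inr ⟨h2, Or.inr hzy⟩
        · exact Or.inl ⟨h1, Or.inr (hL'.trans _ _ _ ((hL'.total z y).resolve_left hzy) h)⟩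
    have hT0 : IsLinearOrder (Fin n) (TCrel c) := TCrel_linear hlt hsplit
    set T : Fin n → Fin n → Prop := fun a b => TCrel c b a with hTdef
    have hT : IsLinearOrder (Fin n) T := linear_flip hT0
    have hnc : ∀ a b : Fin n, a < b → ¬ Relation.TransGen c a b → L a b ∧ L' a b := by
      intro a b hab h
      have h' : ¬ (L b a ∨ L' b a) := fun hor => h (Relation.TransGen.single ⟨hab, hor⟩)
      exact ⟨(hL.total a b).resolve_right (fun x => h' (Or.inl x)),
             (hL'.total a b).resolve_right (fun x => h' (Or.inr x))⟩
    -- T is an upper bound of L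
    have hLT : WeakLE n L T := by
      constructor
      · rintro ⟨a, b⟩ ⟨hab, hLba⟩
        exact ⟨hab, Or.inr (Or.inl ⟨hab, Relation.TransGen.single ⟨hab, Or.inl hLba⟩⟩)⟩
      · rintro ⟨a, b⟩ ⟨hab, hTab⟩
        rcases hTab with h | ⟨h, _⟩ | ⟨_, hn⟩
        · exact absurd h (ne_of_gt hab)
        · exact absurd h (lt_asymm hab)
        · exact ⟨hab, (hnc a b hab hn).1⟩
    have hL'T : WeakLE n L' T := by
      constructor
      · rintro ⟨a, b⟩ ⟨hab, hLba⟩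
        exact ⟨hab, Or.inr (Or.inl ⟨hab, Relation.TransGen.single ⟨hab, Or.inr hLba⟩⟩)⟩
      · rintro ⟨a, b⟩ ⟨hab, hTab⟩
        rcases hTab with h | ⟨h, _⟩ | ⟨_, hn⟩
        · exact absurd h (ne_of_gt hab)
        · exact absurd h (lt_asymm hab)
        · exact ⟨hab, (hnc a b hab hn).2⟩
    have hJT : WeakLE n J T :=
      hlub T { refl := hT.refl, trans := hT.trans, antisymm := hT.antisymm } hLT hL'T
    have decJ : ∀ x y : Fin n, x < y → L y x ∨ L' y x → J y x := by
      rintro x y h1 (h2 | h2)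
      · exact (hLJ.1 (show (x, y) ∈ DecSet n L from ⟨h1, h2⟩)).2
      · exact (hL'J.1 (show (x, y) ∈ DecSet n L' from ⟨h1, h2⟩)).2
    have hmono : ∀ x y : Fin n, Relation.TransGen c x y → J y x := by
      intro x y h
      induction h with
      | single h => exact decJ _ _ h.1 h.2
      | @tail w z hxw hwz ih => exact hJ.trans _ _ _ (decJ _ _ hwz.1 hwz.2) ih
    refine { hJ with total := ?_ }
    intro a b
    rcases lt_trichotomy a b with h | rfl | h
    · by_cases htg : Relation.TransGen c a b
      · exact Or.inr (hmono _ _ htg)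
      · exact Or.inl (hJT.2 (show (a, b) ∈ IncSet n T from ⟨h, Or.inr (Or.inr ⟨h, htg⟩)⟩)).2
    · exact Or.inl (hJ.refl a)
    · by_cases htg : Relation.TransGen c b a
      · exact Or.inl (hmono _ _ htg)
      · exact Or.inr (hJT.2 (show (b, a) ∈ IncSet n T from ⟨h, Or.inr (Or.inr ⟨h, htg⟩)⟩)).2
end

section
/- Let σ and τ be permutations of {1,…,n} with inv(σ) ⊆ inv(τ). Define the relation ≺ on {1,…,n} by: for a < b, b ≺ a iff (a,b) ∈ inv(σ), and a ≺ b iff (a,b) ∉ inv(τ). Then ≺ (together with reflexivity) is a partial order on {1,…,n}, and a permutation μ of {1,…,n} is a linear extension of ≺ if and only if inv(σ) ⊆ inv(μ) ⊆ inv(τ). In other words, the linear extensions of ≺ are exactly the weak order interval [σ, τ]. -/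
/-- The relation `≺` associated to a weak order interval `[σ,τ]`: together
with reflexivity, for `a < b` one has `b ≺ a` iff `(a,b) ∈ inv(σ)` and
`a ≺ b` iff `(a,b) ∉ inv(τ)`. -/
def intervalRel (n : ℕ) (σ τ : Equiv.Perm (Fin n)) : Fin n → Fin n → Prop :=
  fun x y => x = y ∨ (x < y ∧ (x, y) ∉ invSet n τ) ∨ (y < x ∧ (y, x) ∈ invSet n σ)

/-- For permutations `σ, τ` with `inv(σ) ⊆ inv(τ)`, the relation `≺` defined by
`b ≺ a ↔ (a,b) ∈ inv(σ)` and `a ≺ b ↔ (a,b) ∉ inv(τ)` (for `a < b`, together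
with reflexivity) is a partial order whose linear extensions are exactly the
permutations `μ` with `inv(σ) ⊆ inv(μ) ⊆ inv(τ)`, i.e. the weak order
interval `[σ,τ]`. -/
theorem interval_rel_partial_order_and_linear_extensions (n : ℕ)
    (σ τ : Equiv.Perm (Fin n)) (h : invSet n σ ⊆ invSet n τ) :
    IsPartialOrder (Fin n) (intervalRel n σ τ) ∧
    ∀ μ : Equiv.Perm (Fin n),
      IsLinearExtension n (intervalRel n σ τ) μ ↔
        (invSet n σ ⊆ invSet n μ ∧ invSet n μ ⊆ invSet n τ) := by
  have L1 : ∀ a b : Fin n, a < b → σ⁻¹ b < σ⁻¹ a → τ⁻¹ b < τ⁻¹ a :=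
    fun a b hab hs => (show ((a, b) ∈ invSet n τ) from h ⟨hab, hs⟩).2
  have L2 : ∀ a b : Fin n, a < b → τ⁻¹ a < τ⁻¹ b → σ⁻¹ a < σ⁻¹ b := by
    intro a b hab ht
    rcases lt_trichotomy (σ⁻¹ a) (σ⁻¹ b) with h' | h' | h'
    · exact h'
    · exact absurd (σ⁻¹.injective h') hab.ne
    · exact absurd (L1 a b hab h') ht.asymm
  have key : ∀ x y : Fin n, intervalRel n σ τ x y ↔
      x = y ∨ (x < y ∧ τ⁻¹ x < τ⁻¹ y) ∨ (y < x ∧ σ⁻¹ x < σ⁻¹ y) := by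
    intro x y
    unfold intervalRel invSet
    simp only [Set.mem_setOf_eq]
    constructor
    · rintro (rfl | ⟨hlt, hnin⟩ | ⟨hlt, _, hs⟩)
      · exact Or.inl rfl
      · refine Or.inr (Or.inl ⟨hlt, ?_⟩)
        rcases lt_trichotomy (τ⁻¹ x) (τ⁻¹ y) with h' | h' | h'
        · exact h'
        · exact absurd (τ⁻¹.injective h') hlt.ne
        · exact absurd ⟨hlt, h'⟩ hnin
      · exact Or.inr (Or.inr ⟨hlt, hs⟩)
    · rintro (rfl | ⟨hlt, ht⟩ | ⟨hlt, hs⟩)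
      · exact Or.inl rfl
      · exact Or.inr (Or.inl ⟨hlt, fun hc => ht.asymm hc.2⟩)
      · exact Or.inr (Or.inr ⟨hlt, hlt, hs⟩)
  constructor
  · refine { refl := fun x => Or.inl rfl, trans := ?_, antisymm := ?_ }
    · intro x y z hxy hyz
      rw [key] at hxy hyz ⊢
      rcases hxy with rfl | ⟨hxy, hτxy⟩ | ⟨hyx, hσxy⟩
      · exact hyz
      · rcases hyz with rfl | ⟨hyz, hτyz⟩ | ⟨hzy, hσyz⟩
        · exact Or.inr (Or.inl ⟨hxy, hτxy⟩)
        · exact Or.inr (Or.inl ⟨hxy.trans hyz, hτxy.trans hτyz⟩)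
        · -- x < y, z < y
          rcases lt_trichotomy x z with hxz | rfl | hzx
          · exact Or.inr (Or.inl ⟨hxz, hτxy.trans (L1 z y hzy hσyz)⟩)
          · exact Or.inl rfl
          · exact Or.inr (Or.inr ⟨hzx, (L2 x y hxy hτxy).trans hσyz⟩)
      · rcases hyz with rfl | ⟨hyz, hτyz⟩ | ⟨hzy, hσyz⟩
        · exact Or.inr (Or.inr ⟨hyx, hσxy⟩)
        · -- y < x, y < z
          rcases lt_trichotomy x z with hxz | rfl | hzx
          · exact Or.inr (Or.inl ⟨hxz, (L1 y x hyx hσxy).trans hτyz⟩)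
          · exact Or.inl rfl
          · exact Or.inr (Or.inr ⟨hzx, hσxy.trans (L2 y z hyz hτyz)⟩)
        · exact Or.inr (Or.inr ⟨hzy.trans hyx, hσxy.trans hσyz⟩)
    · intro x y hxy hyx
      rw [key] at hxy hyx
      rcases hxy with rfl | ⟨hxy, hτxy⟩ | ⟨hyx', hσxy⟩
      · rfl
      · rcases hyx with rfl | ⟨h1, h2⟩ | ⟨h1, h2⟩
        · rfl
        · exact absurd hxy h1.asymm
        · exact absurd (L1 x y hxy h2) hτxy.asymm
      · rcases hyx with rfl | ⟨h1, h2⟩ | ⟨h1, h2⟩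
        · rfl
        · exact absurd (L1 y x hyx' hσxy) h2.asymm
        · exact absurd hyx' h1.asymm
  · intro μ
    constructor
    · intro hle
      constructor
      · rintro ⟨a, b⟩ ⟨hab, hs⟩
        refine ⟨hab, ?_⟩
        exact hle b a ((key b a).mpr (Or.inr (Or.inr ⟨hab, hs⟩))) hab.ne'
      · rintro ⟨a, b⟩ ⟨hab, hm⟩
        refine ⟨hab, ?_⟩
        rcases lt_trichotomy (τ⁻¹ b) (τ⁻¹ a) with h' | h' | h'
        · exact h'
        · exact absurd (τ⁻¹.injective h') hab.ne'
        · exact absurd (hle a b ((key a b).mpr (Or.inr (Or.inl ⟨hab, h'⟩))) hab.ne) hm.asymm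
    · rintro ⟨hσμ, hμτ⟩ x y hr hne
      rw [key] at hr
      rcases hr with rfl | ⟨hxy, hτxy⟩ | ⟨hyx, hσxy⟩
      · exact absurd rfl hne
      · rcases lt_trichotomy (μ⁻¹ x) (μ⁻¹ y) with h' | h' | h'
        · exact h'
        · exact absurd (μ⁻¹.injective h') hne
        · exact absurd (hμτ (a := (x, y)) ⟨hxy, h'⟩).2 hτxy.asymm
      · exact (hσμ (a := (y, x)) ⟨hyx, hσxy⟩).2
end

section
/- A partial order ≺ on {1,…,n} arises from a weak order interval — that is, there exist permutations σ, τ of {1,…,n} with inv(σ) ⊆ inv(τ) such that for all a < b: b ≺ a iff (a,b) ∈ inv(σ), and a ≺ b iff (a,b) ∉ inv(τ) — if and only if for all 1 ≤ a < b < c ≤ n: (a ≺ c implies a ≺ b or b ≺ c) and (c ≺ a implies c ≺ b or b ≺ a). -/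
lemma exists_equiv_fin_of_isStrictTotalOrder {α : Type*} [Fintype α] {n : ℕ}
    (h : Fintype.card α = n) (q : α → α → Prop) [IsStrictTotalOrder α q] :
    ∃ e : α ≃ Fin n, ∀ a b, q a b ↔ e a < e b := by
  classical
  let _ : LinearOrder α := linearOrderOfSTO q
  let iso := monoEquivOfFin α h
  exact ⟨iso.symm.toEquiv, fun a b => iso.symm.lt_iff_lt.symm⟩

namespace invSet

variable {n : ℕ} {σ : Equiv.Perm (Fin n)} {a b c : Fin n}

lemma trans (hab : (a, b) ∈ invSet n σ) (hbc : (b, c) ∈ invSet n σ) : (a, c) ∈ invSet n σ :=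
  ⟨hab.1.trans hbc.1, hbc.2.trans hab.2⟩

lemma cotrans (hab : a < b) (hbc : b < c) (hac : (a, c) ∈ invSet n σ) :
    (a, b) ∈ invSet n σ ∨ (b, c) ∈ invSet n σ := by
  by_contra! h
  simp only [invSet, Set.mem_ofPred_eq, not_and, not_lt] at h
  exact ((h.1 hab).trans (h.2 hbc)).not_gt hac.2

end invSet

section ofTransCotrans

variable {n : ℕ} (S : Fin n → Fin n → Prop)

def precedesOf (a b : Fin n) : Prop :=
  (a < b ∧ ¬ S a b) ∨ (b < a ∧ S b a)

variable {S}

lemma isStrictTotalOrder_precedesOf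
    (htrans : ∀ a b c : Fin n, a < b → b < c → S a b → S b c → S a c)
    (hcotrans : ∀ a b c : Fin n, a < b → b < c → S a c → S a b ∨ S b c) :
    IsStrictTotalOrder (Fin n) (precedesOf S) where
  trichotomous a b hab hba := by
    by_contra hne
    rcases Ne.lt_or_gt hne with h | h
    · by_cases hS : S a b
      exacts [hba (.inr ⟨h, hS⟩), hab (.inl ⟨h, hS⟩)]
    · by_cases hS : S b a
      exacts [hab (.inr ⟨h, hS⟩), hba (.inl ⟨h, hS⟩)]
  irrefl a := by rintro (⟨h, -⟩ | ⟨h, -⟩) <;> exact lt_irrefl a h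
  trans a b c := by
    rintro (⟨hab, hSab⟩ | ⟨hba, hSba⟩) (⟨hbc, hSbc⟩ | ⟨hcb, hScb⟩)
    · exact .inl ⟨hab.trans hbc, fun hSac => (hcotrans a b c hab hbc hSac).elim hSab hSbc⟩
    · rcases lt_trichotomy a c with hac | rfl | hca
      · exact .inl ⟨hac, fun hSac => hSab (htrans a c b hac hcb hSac hScb)⟩
      · exact absurd hScb hSab
      · exact .inr ⟨hca, (hcotrans c a b hca hab hScb).resolve_right hSab⟩
    · rcases lt_trichotomy a c with hac | rfl | hca
      · exact .inl ⟨hac, fun hSac => hSbc (htrans b a c hba hac hSba hSac)⟩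
      · exact absurd hSba hSbc
      · exact .inr ⟨hca, (hcotrans b c a hbc hca hSba).resolve_left hSbc⟩
    · exact .inr ⟨hcb.trans hba, htrans c b a hcb hba hScb hSba⟩

lemma exists_perm_invSet_iff
    (htrans : ∀ a b c : Fin n, a < b → b < c → S a b → S b c → S a c)
    (hcotrans : ∀ a b c : Fin n, a < b → b < c → S a c → S a b ∨ S b c) :
    ∃ σ : Equiv.Perm (Fin n), ∀ a b : Fin n, a < b → ((a, b) ∈ invSet n σ ↔ S a b) := by
  have := isStrictTotalOrder_precedesOf htrans hcotrans
  obtain ⟨e, he⟩ := exists_equiv_fin_of_isStrictTotalOrder (Fintype.card_fin n) (precedesOf S)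
  refine ⟨e.symm, fun a b hab => ⟨fun hinv => ?_, fun hS => ⟨hab, (he b a).mp (.inr ⟨hab, hS⟩)⟩⟩⟩
  rcases (he b a).mpr hinv.2 with ⟨hba, -⟩ | ⟨-, hS⟩
  exacts [absurd hab hba.asymm, hS]

end ofTransCotrans

/-- A partial order `r` on `{1,…,n}` arises from a weak order interval
(there exist permutations `σ, τ` with `inv(σ) ⊆ inv(τ)` such that for `a < b`:
`r b a ↔ (a,b) ∈ inv(σ)` and `r a b ↔ (a,b) ∉ inv(τ)`) if and only if for all
`a < b < c`: `r a c → r a b ∨ r b c` and `r c a → r c b ∨ r b a`. -/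
theorem weak_order_interval_poset_characterization (n : ℕ)
    (r : Fin n → Fin n → Prop) (hr : IsPartialOrder (Fin n) r) :
    (∃ σ τ : Equiv.Perm (Fin n), invSet n σ ⊆ invSet n τ ∧
      ∀ a b : Fin n, a < b →
        ((r b a ↔ (a, b) ∈ invSet n σ) ∧ (r a b ↔ (a, b) ∉ invSet n τ))) ↔
    (∀ a b c : Fin n, a < b → b < c →
      ((r a c → r a b ∨ r b c) ∧ (r c a → r c b ∨ r b a))) := by
  constructor
  · rintro ⟨σ, τ, -, hστ⟩ a b c hab hbc
    have hac := hab.trans hbc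
    rw [(hστ a b hab).1, (hστ b c hbc).1, (hστ a c hac).1,
      (hστ a b hab).2, (hστ b c hbc).2, (hστ a c hac).2, ← not_and_or]
    exact ⟨fun hτ h => hτ (invSet.trans h.1 h.2), fun hσ => (invSet.cotrans hab hbc hσ).symm⟩
  · intro hyp
    obtain ⟨σ, hσ⟩ := exists_perm_invSet_iff (S := fun a b => r b a)
      (fun a b c _ _ hab hbc => hr.trans c b a hbc hab)
      (fun a b c hab hbc hac => ((hyp a b c hab hbc).2 hac).symm)
    obtain ⟨τ, hτ⟩ := exists_perm_invSet_iff (S := fun a b => ¬ r a b)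
      (fun a b c hab hbc hSab hSbc hac => ((hyp a b c hab hbc).1 hac).elim hSab hSbc)
      (fun a b c _ _ hac => not_and_or.mp fun h => hac (hr.trans a b c h.1 h.2))
    refine ⟨σ, τ, ?_, fun a b hab => ⟨(hσ a b hab).symm, by rw [hτ a b hab, not_not]⟩⟩
    rintro ⟨a, b⟩ hinv
    have hba : r b a := (hσ a b hinv.1).mp hinv
    exact (hτ a b hinv.1).mpr fun hab => hinv.1.ne (hr.antisymm a b hab hba)
end

section
/- For every n, the Tamari interval-posets of size n form a sublattice of the lattice of integer posets: if P and Q are Tamari interval-posets of size n, then the greatest lower bound and the least upper bound of {P, Q} taken in the weak order ⊑ among all partial orders on {1,…,n} are themselves Tamari interval-posets. -/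
/-!
The meet of two Tamari interval-posets `P` and `Q` can be written down: keep the decreasing
relations common to `P` and `Q`, and take the transitive closure of the union of their increasing
relations. The Tamari conditions of `P` and `Q` make this relation transitive, antisymmetric and
again Tamari, and it is the greatest partial order below `P` and `Q` in the weak order. Since the
weak order is antisymmetric on reflexive relations, every greatest lower bound equals it. Joins
follow by duality: reversing `{1,…,n}` preserves Tamari interval-posets and reverses the weak order.
-/

namespace TamariIntervalPoset

variable {n : ℕ}

section WeakOrder

variable {R S : Fin n → Fin n → Prop} {a b : Fin n}

theorem _root_.WeakLE.dec (h : WeakLE n R S) (hab : a < b) (hR : R b a) : S b a :=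
  (h.1 (show (a, b) ∈ DecSet n R from ⟨hab, hR⟩)).2

theorem _root_.WeakLE.inc (h : WeakLE n R S) (hab : a < b) (hS : S a b) : R a b :=
  (h.2 (show (a, b) ∈ IncSet n S from ⟨hab, hS⟩)).2

theorem weakLE_of_forall (dec : ∀ a b : Fin n, a < b → R b a → S b a)
    (inc : ∀ a b : Fin n, a < b → S a b → R a b) : WeakLE n R S :=
  ⟨fun _ hp => ⟨hp.1, dec _ _ hp.1 hp.2⟩, fun _ hp => ⟨hp.1, inc _ _ hp.1 hp.2⟩⟩

theorem eq_of_weakLE_of_weakLE (hR : ∀ a, R a a) (hS : ∀ a, S a a)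
    (hRS : WeakLE n R S) (hSR : WeakLE n S R) : R = S := by
  funext x y
  apply propext
  rcases lt_trichotomy x y with h | rfl | h
  · exact ⟨hSR.inc h, hRS.inc h⟩
  · exact iff_of_true (hR x) (hS x)
  · exact ⟨hRS.dec h, hSR.dec h⟩

end WeakOrder

def IncStep (P Q : Fin n → Fin n → Prop) (x y : Fin n) : Prop :=
  x < y ∧ (P x y ∨ Q x y)

def incClosure (P Q : Fin n → Fin n → Prop) : Fin n → Fin n → Prop :=
  Relation.TransGen (IncStep P Q)

def meet (P Q : Fin n → Fin n → Prop) (x y : Fin n) : Prop :=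
  x = y ∨ incClosure P Q x y ∨ (y < x ∧ P x y ∧ Q x y)

variable {P Q : Fin n → Fin n → Prop}

theorem lt_of_incClosure {x y : Fin n} (h : incClosure P Q x y) : x < y := by
  induction h with
  | single h => exact h.1
  | tail _ h ih => exact ih.trans h.1

theorem meet_iff_incClosure_of_lt {a b : Fin n} (hab : a < b) :
    meet P Q a b ↔ incClosure P Q a b := by
  simp [meet, hab.ne, hab.not_gt]

theorem meet_iff_of_lt {a b : Fin n} (hab : a < b) : meet P Q b a ↔ P b a ∧ Q b a := by
  have : ¬ incClosure P Q b a := fun h => (lt_of_incClosure h).not_gt hab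
  simp [meet, hab.ne', hab, this]

section Tamari

variable (hP : IsTamariIntervalPoset n P) (hQ : IsTamariIntervalPoset n Q)
include hP hQ

theorem incStep_of_lt_of_incStep {a b c : Fin n} (hab : a < b) (hbc : b < c)
    (h : IncStep P Q a c) : IncStep P Q b c :=
  ⟨hbc, h.2.imp (hP.2.1 a b c hab hbc) (hQ.2.1 a b c hab hbc)⟩

theorem incClosure_of_lt_of_incClosure {a b c : Fin n} (hab : a < b) (hbc : b < c)
    (h : incClosure P Q a c) : incClosure P Q b c := by
  induction h with
  | single h => exact .single (incStep_of_lt_of_incStep hP hQ hab hbc h)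
  | @tail m c _ h ih =>
    rcases lt_trichotomy b m with hbm | rfl | hmb
    · exact (ih hbm).tail h
    · exact .single h
    · exact .single (incStep_of_lt_of_incStep hP hQ hmb hbc h)

theorem not_incStep_of_dec {x y m : Fin n} (hym : y < m) (hmx : m ≤ x)
    (hp : P x y) (hq : Q x y) : ¬ IncStep P Q y m := by
  have hp' : P m y := hmx.eq_or_lt.elim (· ▸ hp) (hP.2.2 y m x hym · hp)
  have hq' : Q m y := hmx.eq_or_lt.elim (· ▸ hq) (hQ.2.2 y m x hym · hq)
  rintro ⟨-, h | h⟩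
  · exact hym.ne (hP.1.antisymm _ _ h hp')
  · exact hym.ne (hQ.1.antisymm _ _ h hq')

theorem not_incClosure_of_dec {x y z : Fin n} (hzx : z ≤ x) (hp : P x y) (hq : Q x y) :
    ¬ incClosure P Q y z := by
  intro h
  obtain ⟨m, hym, hmz⟩ := Relation.TransGen.head'_iff.mp h
  have hmz : m ≤ z := by
    rcases Relation.reflTransGen_iff_eq_or_transGen.mp hmz with rfl | hmz
    · exact le_rfl
    · exact (lt_of_incClosure hmz).le
  exact not_incStep_of_dec hP hQ hym.1 (hmz.trans hzx) hp hq hym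

theorem incClosure_of_incClosure_of_dec {x y z : Fin n} (hxz : x < z) (hzy : z < y)
    (hp : P y z) (hq : Q y z) (h : incClosure P Q x y) : incClosure P Q x z := by
  induction h using Relation.TransGen.head_induction_on with
  | single h =>
    exact .single ⟨hxz, h.2.imp (hP.1.trans _ _ _ · hp) (hQ.1.trans _ _ _ · hq)⟩
  | @head a m h hmy ih =>
    rcases lt_trichotomy m z with hmz | rfl | hzm
    · exact .head h (ih hmz)
    · exact .single h
    · have hmy := lt_of_incClosure hmy
      have hp' := hP.2.2 z m y hzm hmy hp
      have hq' := hQ.2.2 z m y hzm hmy hq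
      exact .single ⟨hxz, h.2.imp (hP.1.trans _ _ _ · hp') (hQ.1.trans _ _ _ · hq')⟩

theorem meet_of_incClosure_of_meet {x y z : Fin n} (hxy : incClosure P Q x y)
    (hyz : meet P Q y z) : meet P Q x z := by
  rcases hyz with rfl | hyz | ⟨hzy, hp, hq⟩
  · exact .inr (.inl hxy)
  · exact .inr (.inl (hxy.trans hyz))
  · rcases lt_trichotomy x z with hxz | rfl | hzx
    · exact .inr (.inl (incClosure_of_incClosure_of_dec hP hQ hxz hzy hp hq hxy))
    · exact .inl rfl
    · have hxy := lt_of_incClosure hxy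
      exact .inr (.inr ⟨hzx, hP.2.2 z x y hzx hxy hp, hQ.2.2 z x y hzx hxy hq⟩)

theorem meet_of_dec_of_meet {x y z : Fin n} (hyx : y < x) (hp : P x y) (hq : Q x y)
    (hyz : meet P Q y z) : meet P Q x z := by
  rcases hyz with rfl | hyz | ⟨hzy, hp', hq'⟩
  · exact .inr (.inr ⟨hyx, hp, hq⟩)
  · rcases lt_trichotomy x z with hxz | rfl | hzx
    · exact .inr (.inl (incClosure_of_lt_of_incClosure hP hQ hyx hxz hyz))
    · exact .inl rfl
    · exact (not_incClosure_of_dec hP hQ hzx.le hp hq hyz).elim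
  · exact .inr (.inr ⟨hzy.trans hyx, hP.1.trans _ _ _ hp hp', hQ.1.trans _ _ _ hq hq'⟩)

theorem isPartialOrder_meet : IsPartialOrder (Fin n) (meet P Q) where
  refl _ := .inl rfl
  trans := by
    rintro x y z (rfl | hxy | ⟨hyx, hp, hq⟩) hyz
    · exact hyz
    · exact meet_of_incClosure_of_meet hP hQ hxy hyz
    · exact meet_of_dec_of_meet hP hQ hyx hp hq hyz
  antisymm x y hxy hyx := by
    have asymm : ∀ a b, a < b → meet P Q a b → ¬ meet P Q b a := fun a b hab hab' hba =>
      let ⟨hp, hq⟩ := (meet_iff_of_lt hab).mp hba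
      not_incClosure_of_dec hP hQ le_rfl hp hq ((meet_iff_incClosure_of_lt hab).mp hab')
    rcases lt_trichotomy x y with h | h | h
    · exact (asymm x y h hxy hyx).elim
    · exact h
    · exact (asymm y x h hyx hxy).elim

end Tamari

theorem isTamariIntervalPoset_meet (hP : IsTamariIntervalPoset n P)
    (hQ : IsTamariIntervalPoset n Q) : IsTamariIntervalPoset n (meet P Q) := by
  refine ⟨isPartialOrder_meet hP hQ, fun a b c hab hbc h => ?_, fun a b c hab hbc h => ?_⟩
  · rw [meet_iff_incClosure_of_lt hbc]
    exact incClosure_of_lt_of_incClosure hP hQ hab hbc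
      ((meet_iff_incClosure_of_lt (hab.trans hbc)).mp h)
  · obtain ⟨hp, hq⟩ := (meet_iff_of_lt (hab.trans hbc)).mp h
    exact (meet_iff_of_lt hab).mpr ⟨hP.2.2 a b c hab hbc hp, hQ.2.2 a b c hab hbc hq⟩

theorem meet_weakLE_left : WeakLE n (meet P Q) P :=
  weakLE_of_forall (fun _ _ hab h => ((meet_iff_of_lt hab).mp h).1)
    (fun _ _ hab h => (meet_iff_incClosure_of_lt hab).mpr (.single ⟨hab, .inl h⟩))

theorem meet_weakLE_right : WeakLE n (meet P Q) Q :=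
  weakLE_of_forall (fun _ _ hab h => ((meet_iff_of_lt hab).mp h).2)
    (fun _ _ hab h => (meet_iff_incClosure_of_lt hab).mpr (.single ⟨hab, .inr h⟩))

theorem weakLE_meet {T : Fin n → Fin n → Prop} (hT : IsPartialOrder (Fin n) T)
    (hTP : WeakLE n T P) (hTQ : WeakLE n T Q) : WeakLE n T (meet P Q) := by
  refine weakLE_of_forall (fun _ _ hab h => (meet_iff_of_lt hab).mpr
    ⟨hTP.dec hab h, hTQ.dec hab h⟩) fun a b hab h => ?_
  have hstep : IncStep P Q ≤ T := fun x y ⟨hxy, h⟩ => h.elim (hTP.inc hxy) (hTQ.inc hxy)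
  rw [← Relation.transGen_eq_self (r := T)]
  exact Relation.TransGen.mono hstep a b ((meet_iff_incClosure_of_lt hab).mp h)

theorem isTamariIntervalPoset_of_isGLB {M : Fin n → Fin n → Prop}
    (hP : IsTamariIntervalPoset n P) (hQ : IsTamariIntervalPoset n Q)
    (hM : IsPartialOrder (Fin n) M) (hMP : WeakLE n M P) (hMQ : WeakLE n M Q)
    (hglb : ∀ T : Fin n → Fin n → Prop, IsPartialOrder (Fin n) T →
      WeakLE n T P → WeakLE n T Q → WeakLE n T M) :
    IsTamariIntervalPoset n M := by
  have hmeet := isPartialOrder_meet hP hQ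
  have : M = meet P Q := eq_of_weakLE_of_weakLE hM.refl hmeet.refl
    (weakLE_meet hM hMP hMQ) (hglb _ hmeet meet_weakLE_left meet_weakLE_right)
  exact this ▸ isTamariIntervalPoset_meet hP hQ

section Reverse

def rev (r : Fin n → Fin n → Prop) (x y : Fin n) : Prop :=
  r x.rev y.rev

@[simp]
theorem rev_rev (r : Fin n → Fin n → Prop) : rev (rev r) = r := by
  funext x y
  simp [rev]

theorem _root_.IsPartialOrder.rev {r : Fin n → Fin n → Prop} (h : IsPartialOrder (Fin n) r) :
    IsPartialOrder (Fin n) (rev r) where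
  refl _ := h.refl _
  trans _ _ _ := h.trans _ _ _
  antisymm _ _ hab hba := Fin.rev_injective (h.antisymm _ _ hab hba)

theorem _root_.IsTamariIntervalPoset.rev {r : Fin n → Fin n → Prop}
    (h : IsTamariIntervalPoset n r) : IsTamariIntervalPoset n (rev r) :=
  ⟨h.1.rev, fun a b c hab hbc => h.2.2 c.rev b.rev a.rev (Fin.rev_lt_rev.mpr hbc)
      (Fin.rev_lt_rev.mpr hab),
    fun a b c hab hbc => h.2.1 c.rev b.rev a.rev (Fin.rev_lt_rev.mpr hbc)
      (Fin.rev_lt_rev.mpr hab)⟩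

theorem _root_.WeakLE.rev {R S : Fin n → Fin n → Prop} (h : WeakLE n R S) :
    WeakLE n (rev S) (rev R) :=
  weakLE_of_forall (fun _ _ hab => h.inc (Fin.rev_lt_rev.mpr hab))
    (fun _ _ hab => h.dec (Fin.rev_lt_rev.mpr hab))

theorem weakLE_rev_iff_weakLE_rev {R T : Fin n → Fin n → Prop} :
    WeakLE n T (rev R) ↔ WeakLE n R (rev T) :=
  ⟨fun h => rev_rev R ▸ h.rev, fun h => rev_rev T ▸ h.rev⟩

end Reverse

theorem isTamariIntervalPoset_of_isLUB {J : Fin n → Fin n → Prop}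
    (hP : IsTamariIntervalPoset n P) (hQ : IsTamariIntervalPoset n Q)
    (hJ : IsPartialOrder (Fin n) J) (hPJ : WeakLE n P J) (hQJ : WeakLE n Q J)
    (hlub : ∀ T : Fin n → Fin n → Prop, IsPartialOrder (Fin n) T →
      WeakLE n P T → WeakLE n Q T → WeakLE n J T) :
    IsTamariIntervalPoset n J := by
  have hrevJ : IsTamariIntervalPoset n (rev J) := by
    refine isTamariIntervalPoset_of_isGLB hP.rev hQ.rev hJ.rev hPJ.rev hQJ.rev
      fun T hT hTP hTQ => ?_
    rw [weakLE_rev_iff_weakLE_rev] at hTP hTQ ⊢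
    exact hlub _ hT.rev hTP hTQ
  simpa using hrevJ.rev

end TamariIntervalPoset

/-- Tamari interval-posets of size `n` form a sublattice of the lattice of
integer posets: for Tamari interval-posets `P, Q`, any greatest lower bound
and any least upper bound of `{P, Q}` taken in the weak order `⊑` among all
partial orders on `{1,…,n}` is again a Tamari interval-poset. -/
theorem tamari_interval_posets_sublattice (n : ℕ)
    (P Q : Fin n → Fin n → Prop)
    (hP : IsTamariIntervalPoset n P) (hQ : IsTamariIntervalPoset n Q) :
    (∀ M : Fin n → Fin n → Prop, IsPartialOrder (Fin n) M →
      WeakLE n M P → WeakLE n M Q →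
      (∀ T : Fin n → Fin n → Prop, IsPartialOrder (Fin n) T →
        WeakLE n T P → WeakLE n T Q → WeakLE n T M) →
      IsTamariIntervalPoset n M) ∧
    (∀ J : Fin n → Fin n → Prop, IsPartialOrder (Fin n) J →
      WeakLE n P J → WeakLE n Q J →
      (∀ T : Fin n → Fin n → Prop, IsPartialOrder (Fin n) T →
        WeakLE n P T → WeakLE n Q T → WeakLE n J T) →
      IsTamariIntervalPoset n J) :=
  ⟨fun _ => TamariIntervalPoset.isTamariIntervalPoset_of_isGLB hP hQ,
    fun _ => TamariIntervalPoset.isTamariIntervalPoset_of_isLUB hP hQ⟩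
end

section
/- Fix n and a decoration δ : {1,…,n} → {none, down, up, updown}. The δ-permutree congruence ≡_δ is a lattice congruence of the right weak order on permutations of {1,…,n}: if σ ≡_δ σ' and τ ≡_δ τ', then whenever μ is a least upper bound of {σ, τ} and μ' is a least upper bound of {σ', τ'} in the right weak order, one has μ ≡_δ μ'; and likewise for greatest lower bounds. -/
/-- The four possible decorations of a value. -/
inductive Decoration : Type
  | none | down | up | updown
  deriving DecidableEq

/-- An elementary permutree exchange for the decoration `δ`: the permutations
`σ` and `τ = σ ∘ (swap of two adjacent positions i, i+1)` differ by exchanging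
two adjacent letters `a = σ i < c = σ (i+1)` in one-line notation, and there
is a `b` with `a < b < c` such that either `δ b ∈ {down, updown}` and `b`
occurs after position `i+1` (in the suffix), or `δ b ∈ {up, updown}` and `b`
occurs before position `i` (in the prefix). -/
def PermutreeMove (n : ℕ) (δ : Fin n → Decoration)
    (σ τ : Equiv.Perm (Fin n)) : Prop :=
  ∃ i j : Fin n, (i : ℕ) + 1 = (j : ℕ) ∧ σ i < σ j ∧ τ = σ * Equiv.swap i j ∧
    ∃ b : Fin n, σ i < b ∧ b < σ j ∧
      (((δ b = Decoration.down ∨ δ b = Decoration.updown) ∧ j < σ⁻¹ b) ∨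
        ((δ b = Decoration.up ∨ δ b = Decoration.updown) ∧ σ⁻¹ b < i))

/-- The `δ`-permutree congruence: the equivalence relation on permutations
generated by the elementary permutree exchanges. -/
inductive PermutreeCong (n : ℕ) (δ : Fin n → Decoration) :
    Equiv.Perm (Fin n) → Equiv.Perm (Fin n) → Prop
  | rel : ∀ {σ τ}, PermutreeMove n δ σ τ → PermutreeCong n δ σ τ
  | refl : ∀ σ, PermutreeCong n δ σ σ
  | symm : ∀ {σ τ}, PermutreeCong n δ σ τ → PermutreeCong n δ τ σ
  | trans : ∀ {σ τ ρ}, PermutreeCong n δ σ τ → PermutreeCong n δ τ ρ →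
      PermutreeCong n δ σ ρ

/-- `μ` is a least upper bound of `{σ, τ}` in the right weak order. -/
def IsWeakLUB (n : ℕ) (μ σ τ : Equiv.Perm (Fin n)) : Prop :=
  invSet n σ ⊆ invSet n μ ∧ invSet n τ ⊆ invSet n μ ∧
    ∀ ρ : Equiv.Perm (Fin n),
      invSet n σ ⊆ invSet n ρ → invSet n τ ⊆ invSet n ρ → invSet n μ ⊆ invSet n ρ

/-- `μ` is a greatest lower bound of `{σ, τ}` in the right weak order. -/
def IsWeakGLB (n : ℕ) (μ σ τ : Equiv.Perm (Fin n)) : Prop :=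
  invSet n μ ⊆ invSet n σ ∧ invSet n μ ⊆ invSet n τ ∧
    ∀ ρ : Equiv.Perm (Fin n),
      invSet n ρ ⊆ invSet n σ → invSet n ρ ⊆ invSet n τ → invSet n ρ ⊆ invSet n μ

/-!
Inversion sets of permutations are exactly the transitive and cotransitive sets of pairs
`a < b`, so the join of `σ` and `τ` in the weak order exists and its inversion set is the
transitive closure of `inv σ ∪ inv τ`. By induction on the congruence it suffices to compare the
joins `σ ∨ τ` and `σ' ∨ τ` when `σ'` arises from `σ` by one exchange of `a < c`, witnessed by
some `a < b < c`. Every inversion `(x, y)` of `σ' ∨ τ` that is not one of `σ ∨ τ` has `x = a` or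
`(x, a)` an inversion of `σ ∨ τ`, and `y = c` or `(c, y)` one; so `b` still witnesses the
exchange of `x` and `y`, and `σ' ∨ τ` is reached from `σ ∨ τ` by witnessed exchanges of adjacent
letters. Meets reduce to joins by reversing the one-line notation.
-/

open Equiv
open scoped Finset

section InversionSet

variable {α : Type*}

def transClosure (I : Set (α × α)) : Set (α × α) :=
  {p | Relation.TransGen (fun a b => (a, b) ∈ I) p.1 p.2}

theorem subset_transClosure (I : Set (α × α)) : I ⊆ transClosure I :=
  fun _ hp => Relation.TransGen.single hp

theorem transClosure_mono {I J : Set (α × α)} (h : I ⊆ J) : transClosure I ⊆ transClosure J :=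
  fun _ hp => Relation.TransGen.mono (fun _ _ hab => h hab) _ _ hp

theorem transClosure_subset {I J : Set (α × α)}
    (hJ : ∀ a b c, (a, b) ∈ J → (b, c) ∈ J → (a, c) ∈ J) (hIJ : I ⊆ J) :
    transClosure I ⊆ J := fun p hp =>
  @Relation.transGen_minimal _ _ (fun a b => (a, b) ∈ J) ⟨hJ⟩ (fun _ _ h => hIJ h) p.1 p.2 hp

variable [LinearOrder α]

theorem transGen_cotrans {r : α → α → Prop}
    (hr : ∀ a b c, a < b → b < c → r a c → r a b ∨ r b c) {a b c : α}
    (hab : a < b) (hbc : b < c) (h : Relation.TransGen r a c) :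
    Relation.TransGen r a b ∨ Relation.TransGen r b c := by
  induction h generalizing b with
  | single h => exact (hr _ _ _ hab hbc h).imp .single .single
  | @tail w z haw hwz ih =>
    rcases lt_trichotomy b w with hbw | rfl | hwb
    · exact (ih hab hbw).imp_right (·.tail hwz)
    · exact .inl haw
    · exact (hr _ _ _ hwb hbc hwz).imp haw.tail .single

/-- Exactly the inversion sets of permutations of `Fin n`, by `isInversionSet_invSet` and
`IsInversionSet.exists_invSet_eq`. -/
structure IsInversionSet (I : Set (α × α)) : Prop where
  lt_of_mem : ∀ p ∈ I, p.1 < p.2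
  trans : ∀ a b c, (a, b) ∈ I → (b, c) ∈ I → (a, c) ∈ I
  cotrans : ∀ a b c, a < b → b < c → (a, c) ∈ I → (a, b) ∈ I ∨ (b, c) ∈ I

theorem IsInversionSet.transClosure_union {I₁ I₂ : Set (α × α)} (h₁ : IsInversionSet I₁)
    (h₂ : IsInversionSet I₂) : IsInversionSet (transClosure (I₁ ∪ I₂)) where
  lt_of_mem p hp := Relation.transGen_minimal (r' := (· < ·))
    (fun _ _ h => h.elim (h₁.lt_of_mem _) (h₂.lt_of_mem _)) p.1 p.2 hp
  trans _ _ _ := Relation.TransGen.trans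
  cotrans _ _ _ hab hbc := transGen_cotrans (fun _ _ _ hab hbc h => h.elim
    (fun h => (h₁.cotrans _ _ _ hab hbc h).imp .inl .inl)
    (fun h => (h₂.cotrans _ _ _ hab hbc h).imp .inr .inr)) hab hbc

theorem IsInversionSet.transClosure_union_singleton_subset {J : Set (α × α)}
    (hJ : IsInversionSet J) {a c : α} (hac : a < c) :
    transClosure (J ∪ {(a, c)}) ⊆
      J ∪ {p | (p.1 = a ∨ (p.1, a) ∈ J) ∧ (p.2 = c ∨ (c, p.2) ∈ J)} := by
  have le_of_mem {x y : α} (h : x = y ∨ (x, y) ∈ J) : x ≤ y :=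
    h.elim le_of_eq fun h => (hJ.lt_of_mem _ h).le
  refine transClosure_subset ?_ ?_
  · rintro x y z (hxy | ⟨hx, hy⟩) (hyz | ⟨hy', hz⟩)
    · exact .inl (hJ.trans _ _ _ hxy hyz)
    · refine .inr ⟨?_, hz⟩
      rcases hy' with rfl | hy'
      exacts [.inr hxy, .inr (hJ.trans _ _ _ hxy hy')]
    · refine .inr ⟨hx, ?_⟩
      rcases hy with rfl | hy
      exacts [.inr hyz, .inr (hJ.trans _ _ _ hy hyz)]
    · exact absurd ((le_of_mem (hy.imp_left Eq.symm)).trans (le_of_mem hy')) (not_le.2 hac)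
  · rintro ⟨x, y⟩ (h | h)
    · exact .inl h
    · obtain ⟨rfl, rfl⟩ := Prod.mk.inj h
      exact .inr ⟨.inl rfl, .inl rfl⟩

/-- The letter `p` is written to the left of `q` in a word whose inversion set is `I`. -/
def Precedes (I : Set (α × α)) (p q : α) : Prop :=
  (p < q ∧ (p, q) ∉ I) ∨ (q < p ∧ (q, p) ∈ I)

theorem precedes_irrefl (I : Set (α × α)) (p : α) : ¬ Precedes I p p := by
  rintro (⟨h, -⟩ | ⟨h, -⟩) <;> exact h.false

theorem precedes_or_precedes {I : Set (α × α)} {p q : α} (hpq : p ≠ q) :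
    Precedes I p q ∨ Precedes I q p := by
  rcases hpq.lt_or_gt with h | h <;> by_cases hI : (min p q, max p q) ∈ I <;>
    simp_all [Precedes, h.le]

theorem IsInversionSet.precedes_trans {I : Set (α × α)} (hI : IsInversionSet I) {p q r : α} :
    Precedes I p q → Precedes I q r → Precedes I p r := by
  rintro (⟨hpq, hn⟩ | ⟨hqp, hi⟩) (⟨hqr, hn'⟩ | ⟨hrq, hi'⟩)
  · exact .inl ⟨hpq.trans hqr, fun h => (hI.cotrans _ _ _ hpq hqr h).elim hn hn'⟩
  · rcases lt_trichotomy p r with hpr | rfl | hrp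
    · exact .inl ⟨hpr, fun h => hn (hI.trans _ _ _ h hi')⟩
    · exact absurd hi' hn
    · exact .inr ⟨hrp, (hI.cotrans _ _ _ hrp hpq hi').resolve_right hn⟩
  · rcases lt_trichotomy p r with hpr | rfl | hrp
    · exact .inl ⟨hpr, fun h => hn' (hI.trans _ _ _ hi h)⟩
    · exact absurd hi hn'
    · exact .inr ⟨hrp, (hI.cotrans _ _ _ hqr hrp hi).resolve_left hn'⟩
  · exact .inr ⟨hrq.trans hqp, hI.trans _ _ _ hi' hi⟩

end InversionSet

section Perm

variable {n : ℕ}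

@[simp]
theorem mem_invSet {σ : Perm (Fin n)} {a b : Fin n} :
    (a, b) ∈ invSet n σ ↔ a < b ∧ σ⁻¹ b < σ⁻¹ a := Iff.rfl

theorem isInversionSet_invSet (σ : Perm (Fin n)) : IsInversionSet (invSet n σ) where
  lt_of_mem _ hp := hp.1
  trans _ _ _ hab hbc := ⟨hab.1.trans hbc.1, hbc.2.trans hab.2⟩
  cotrans a b c hab hbc hac := by
    rcases lt_or_ge (σ⁻¹ b) (σ⁻¹ a) with h | h
    · exact .inl ⟨hab, h⟩
    · exact .inr ⟨hbc, hac.2.trans_le h⟩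

theorem notMem_invSet_of_lt (σ : Perm (Fin n)) {i j : Fin n} (hij : i < j) :
    (σ i, σ j) ∉ invSet n σ := by
  simp [hij.le]

theorem IsInversionSet.exists_invSet_eq {I : Set (Fin n × Fin n)} (hI : IsInversionSet I) :
    ∃ σ : Perm (Fin n), invSet n σ = I := by
  classical
  -- the position of a letter is the number of letters preceding it
  have card_lt (p : Fin n) : #{q | Precedes I q p} < n := by
    have h : ({q | Precedes I q p} : Finset (Fin n)) ⊂ Finset.univ :=
      Finset.filter_ssubset.2 ⟨p, Finset.mem_univ _, precedes_irrefl I p⟩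
    simpa using Finset.card_lt_card h
  let pos (p : Fin n) : Fin n := ⟨#{q | Precedes I q p}, card_lt p⟩
  have pos_lt_of_precedes {p q : Fin n} (h : Precedes I p q) : pos p < pos q := by
    refine Fin.mk_lt_mk.2 <|
      Finset.card_lt_card ((Finset.ssubset_iff_of_subset fun r hr => ?_).2 ⟨p, ?_, ?_⟩)
    · simp only [Finset.mem_filter, Finset.mem_univ, true_and] at hr ⊢
      exact hI.precedes_trans hr h
    · simpa using h
    · simpa using precedes_irrefl I p
  have pos_lt_iff {p q : Fin n} : pos p < pos q ↔ Precedes I p q := by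
    refine ⟨fun h => ?_, pos_lt_of_precedes⟩
    obtain rfl | hpq := eq_or_ne p q
    · exact absurd h (lt_irrefl _)
    · exact (precedes_or_precedes hpq).resolve_right fun h' => (pos_lt_of_precedes h').asymm h
  have pos_injective : Function.Injective pos := fun p q h => by
    by_contra hpq
    exact (precedes_or_precedes hpq).elim (fun h' => (pos_lt_iff.2 h').ne h)
      fun h' => (pos_lt_iff.2 h').ne h.symm
  let e := Equiv.ofBijective pos (Finite.injective_iff_bijective.1 pos_injective)
  refine ⟨e⁻¹, Set.ext fun ⟨p, q⟩ => ?_⟩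
  simp only [mem_invSet, inv_inv]
  change p < q ∧ pos q < pos p ↔ _
  rw [pos_lt_iff]
  refine ⟨fun ⟨hpq, h⟩ => ?_, fun h => ⟨hI.lt_of_mem _ h, .inr ⟨hI.lt_of_mem _ h, h⟩⟩⟩
  rcases h with ⟨h, -⟩ | ⟨-, h⟩
  exacts [absurd h hpq.asymm, h]

theorem exists_ascent_mem_invSet {π π' : Perm (Fin n)} (hle : invSet n π ⊆ invSet n π')
    (hne : π ≠ π') :
    ∃ i j : Fin n, (i : ℕ) + 1 = j ∧ π i < π j ∧ (π i, π j) ∈ invSet n π' := by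
  by_contra! h
  have step (i j : Fin n) (hij : (i : ℕ) + 1 = j) : π'⁻¹ (π i) < π'⁻¹ (π j) := by
    have hij' : i < j := by omega
    rcases lt_or_gt_of_ne (π.injective.ne hij'.ne) with hlt | hgt
    · refine lt_of_le_of_ne ?_ (π'⁻¹.injective.ne (π.injective.ne hij'.ne))
      simpa [hlt] using h i j hij hlt
    · simpa using (hle (show (π j, π i) ∈ invSet n π by simpa [hgt])).2
  have hmono : StrictMono (π'⁻¹ * π) := by
    obtain _ | m := n
    · exact fun i => i.elim0
    · exact Fin.strictMono_iff_lt_succ.2 fun i => step _ _ (by simp)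
  exact hne (Perm.ext fun x => by simpa using congrArg π' hmono.apply_eq)

theorem invSet_injective : Function.Injective (invSet n) := by
  intro π π' h
  by_contra hne
  obtain ⟨i, j, hij, -, hmem⟩ := exists_ascent_mem_invSet h.le hne
  exact notMem_invSet_of_lt π (by omega) (h ▸ hmem)

theorem swap_lt_swap_iff_of_adjacent {i j x y : Fin n} (hij : (i : ℕ) + 1 = j)
    (hxy : ¬ (x = i ∧ y = j)) (hyx : ¬ (x = j ∧ y = i)) :
    swap i j x < swap i j y ↔ x < y := by
  simp only [swap_apply_def, Fin.lt_def, Fin.ext_iff] at *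
  split_ifs <;> omega

theorem invSet_mul_swap {σ : Perm (Fin n)} {i j : Fin n} (hij : (i : ℕ) + 1 = j)
    (hlt : σ i < σ j) : invSet n (σ * swap i j) = invSet n σ ∪ {(σ i, σ j)} := by
  ext ⟨p, q⟩
  obtain ⟨x, rfl⟩ := σ.surjective p
  obtain ⟨y, rfl⟩ := σ.surjective q
  have hij' : i < j := by omega
  simp only [Set.mem_union, Set.mem_singleton_iff, mem_invSet, mul_inv_rev, swap_inv,
    Perm.mul_apply, Perm.coe_inv, symm_apply_apply, Prod.mk.injEq, σ.injective.eq_iff]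
  by_cases h₁ : x = i ∧ y = j
  · obtain ⟨rfl, rfl⟩ := h₁
    simp [hlt, hij']
  by_cases h₂ : x = j ∧ y = i
  · obtain ⟨rfl, rfl⟩ := h₂
    simp [hlt.not_gt, hij'.ne']
  rw [swap_lt_swap_iff_of_adjacent hij (by tauto) (by tauto)]
  tauto

end Perm

section Move
variable {n : ℕ} {δ : Fin n → Decoration}

/-- Adjacent letters `a < c` may be exchanged in a permutation with inversion set `I` when some
`a < b < c` with a down decoration comes after `c`, or some with an up decoration comes before
`a`. -/
def HasPermutreeWitness (δ : Fin n → Decoration) (I : Set (Fin n × Fin n)) (a c : Fin n) :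
    Prop :=
  ∃ b, a < b ∧ b < c ∧
    (((δ b = .down ∨ δ b = .updown) ∧ (b, c) ∈ I) ∨ ((δ b = .up ∨ δ b = .updown) ∧ (a, b) ∈ I))

theorem HasPermutreeWitness.mono {I J : Set (Fin n × Fin n)} {a c : Fin n} (hIJ : I ⊆ J)
    (h : HasPermutreeWitness δ I a c) : HasPermutreeWitness δ J a c := by
  obtain ⟨b, hab, hbc, hb⟩ := h
  exact ⟨b, hab, hbc, hb.imp (.imp_right (hIJ ·)) (.imp_right (hIJ ·))⟩

theorem HasPermutreeWitness.widen {J : Set (Fin n × Fin n)} (hJ : IsInversionSet J)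
    {a c x y : Fin n} (h : HasPermutreeWitness δ J a c) (hx : x = a ∨ (x, a) ∈ J)
    (hy : y = c ∨ (c, y) ∈ J) : HasPermutreeWitness δ J x y := by
  obtain ⟨b, hab, hbc, hb⟩ := h
  have hxb : x < b := by
    rcases hx with rfl | hx
    exacts [hab, (hJ.lt_of_mem _ hx).trans hab]
  have hby : b < y := by
    rcases hy with rfl | hy
    exacts [hbc, hbc.trans (hJ.lt_of_mem _ hy)]
  refine ⟨b, hxb, hby, hb.imp (.imp_right fun hb => ?_) (.imp_right fun hb => ?_)⟩
  · rcases hy with rfl | hy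
    exacts [hb, hJ.trans _ _ _ hb hy]
  · rcases hx with rfl | hx
    exacts [hb, hJ.trans _ _ _ hx hb]

theorem permutreeMove_iff {σ τ : Perm (Fin n)} :
    PermutreeMove n δ σ τ ↔ ∃ i j : Fin n, (i : ℕ) + 1 = j ∧ σ i < σ j ∧
      τ = σ * swap i j ∧ HasPermutreeWitness δ (invSet n σ) (σ i) (σ j) := by
  simp only [PermutreeMove, HasPermutreeWitness, mem_invSet, Perm.coe_inv, symm_apply_apply]
  constructor
  · rintro ⟨i, j, hij, hlt, rfl, b, hab, hbc, hb⟩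
    exact ⟨i, j, hij, hlt, rfl, b, hab, hbc, by tauto⟩
  · rintro ⟨i, j, hij, hlt, rfl, b, hab, hbc, hb⟩
    exact ⟨i, j, hij, hlt, rfl, b, hab, hbc, by tauto⟩

theorem permutreeCong_of_forall_hasPermutreeWitness {μ μ' : Perm (Fin n)}
    (hle : invSet n μ ⊆ invSet n μ')
    (hw : ∀ p ∈ invSet n μ' \ invSet n μ, HasPermutreeWitness δ (invSet n μ) p.1 p.2) :
    PermutreeCong n δ μ μ' := by
  obtain rfl | hne := eq_or_ne μ μ'
  · exact .refl μ
  obtain ⟨i, j, hij, hlt, hmem⟩ := exists_ascent_mem_invSet hle hne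
  have hinv := invSet_mul_swap hij hlt
  have hnew : (μ i, μ j) ∈ invSet n μ' \ invSet n μ :=
    ⟨hmem, notMem_invSet_of_lt μ (by omega)⟩
  have hmove : PermutreeMove n δ μ (μ * swap i j) :=
    permutreeMove_iff.2 ⟨i, j, hij, hlt, rfl, hw _ hnew⟩
  have hssub : invSet n μ' \ invSet n (μ * swap i j) ⊂ invSet n μ' \ invSet n μ := by
    rw [hinv, ← Set.sdiff_sdiff]
    exact Set.sdiff_singleton_ssubset.2 hnew
  have := Set.ncard_lt_ncard hssub
  refine .trans (.rel hmove) (permutreeCong_of_forall_hasPermutreeWitness ?_ fun p hp => ?_)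
  · rw [hinv]
    exact Set.union_subset hle (Set.singleton_subset_iff.2 hmem)
  · rw [hinv]
    exact (hw p (hssub.subset hp)).mono Set.subset_union_left
termination_by (invSet n μ' \ invSet n μ).ncard

end Move

section Join
variable {n : ℕ} {δ : Fin n → Decoration}

theorem isWeakLUB_of_invSet_eq {μ σ τ : Perm (Fin n)}
    (hμ : invSet n μ = transClosure (invSet n σ ∪ invSet n τ)) : IsWeakLUB n μ σ τ := by
  refine ⟨?_, ?_, fun ρ hσ hτ => ?_⟩
  · exact hμ ▸ Set.subset_union_left.trans (subset_transClosure _)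
  · exact hμ ▸ Set.subset_union_right.trans (subset_transClosure _)
  · exact hμ ▸ transClosure_subset (isInversionSet_invSet ρ).trans (Set.union_subset hσ hτ)

theorem exists_invSet_eq_transClosure (σ τ : Perm (Fin n)) :
    ∃ μ, invSet n μ = transClosure (invSet n σ ∪ invSet n τ) :=
  ((isInversionSet_invSet σ).transClosure_union (isInversionSet_invSet τ)).exists_invSet_eq

theorem exists_isWeakLUB (σ τ : Perm (Fin n)) : ∃ μ, IsWeakLUB n μ σ τ :=
  (exists_invSet_eq_transClosure σ τ).imp fun _ => isWeakLUB_of_invSet_eq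

theorem IsWeakLUB.invSet_eq {μ σ τ : Perm (Fin n)} (h : IsWeakLUB n μ σ τ) :
    invSet n μ = transClosure (invSet n σ ∪ invSet n τ) := by
  obtain ⟨ν, hν⟩ := exists_invSet_eq_transClosure σ τ
  have h' := isWeakLUB_of_invSet_eq hν
  exact ((h.2.2 ν h'.1 h'.2.1).antisymm (h'.2.2 μ h.1 h.2.1)).trans hν

theorem IsWeakLUB.symm {μ σ τ : Perm (Fin n)} (h : IsWeakLUB n μ σ τ) : IsWeakLUB n μ τ σ :=
  ⟨h.2.1, h.1, fun ρ hτ hσ => h.2.2 ρ hσ hτ⟩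

theorem IsWeakLUB.unique {μ μ' σ τ : Perm (Fin n)} (h : IsWeakLUB n μ σ τ)
    (h' : IsWeakLUB n μ' σ τ) : μ = μ' :=
  invSet_injective (h.invSet_eq.trans h'.invSet_eq.symm)

theorem PermutreeMove.isWeakLUB {σ σ' τ μ μ' : Perm (Fin n)} (hm : PermutreeMove n δ σ σ')
    (h : IsWeakLUB n μ σ τ) (h' : IsWeakLUB n μ' σ' τ) : PermutreeCong n δ μ μ' := by
  obtain ⟨i, j, hij, hlt, rfl, hw⟩ := permutreeMove_iff.1 hm
  have hinv := invSet_mul_swap hij hlt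
  have hle : invSet n μ ⊆ invSet n μ' :=
    h.2.2 μ' (Set.subset_union_left.trans (hinv ▸ h'.1)) h'.2.1
  have hJ := isInversionSet_invSet μ
  -- `invSet n μ'` is the transitive closure of `invSet n μ ∪ {(σ i, σ j)}`
  have hsub : invSet n μ' ⊆ invSet n μ ∪
      {p | (p.1 = σ i ∨ (p.1, σ i) ∈ invSet n μ) ∧ (p.2 = σ j ∨ (σ j, p.2) ∈ invSet n μ)} := by
    refine h'.invSet_eq ▸
      (transClosure_mono ?_).trans (hJ.transClosure_union_singleton_subset hlt)
    rw [hinv, Set.union_right_comm]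
    exact Set.union_subset_union_left _ (Set.union_subset h.1 h.2.1)
  refine permutreeCong_of_forall_hasPermutreeWitness hle fun p ⟨hp, hpμ⟩ => ?_
  obtain ⟨hx, hy⟩ := (hsub hp).resolve_left hpμ
  exact (hw.mono h.1).widen hJ hx hy

theorem PermutreeCong.isWeakLUB_left {σ σ' τ μ μ' : Perm (Fin n)}
    (hσ : PermutreeCong n δ σ σ') (h : IsWeakLUB n μ σ τ) (h' : IsWeakLUB n μ' σ' τ) :
    PermutreeCong n δ μ μ' := by
  induction hσ generalizing μ μ' with
  | rel hm => exact hm.isWeakLUB h h'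
  | refl => exact h.unique h' ▸ .refl μ
  | symm _ ih => exact (ih h' h).symm
  | @trans _ σ₂ _ _ _ ih₁ ih₂ =>
    obtain ⟨ν, hν⟩ := exists_isWeakLUB σ₂ τ
    exact (ih₁ h hν).trans (ih₂ hν h')

theorem PermutreeCong.isWeakLUB {σ σ' τ τ' μ μ' : Perm (Fin n)}
    (hσ : PermutreeCong n δ σ σ') (hτ : PermutreeCong n δ τ τ')
    (h : IsWeakLUB n μ σ τ) (h' : IsWeakLUB n μ' σ' τ') : PermutreeCong n δ μ μ' := by
  obtain ⟨ν, hν⟩ := exists_isWeakLUB σ' τ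
  exact (hσ.isWeakLUB_left h hν).trans (hτ.isWeakLUB_left hν.symm h'.symm)

end Join

/-- Reversing the one-line notation exchanges prefixes and suffixes, hence `down` and `up`. -/
def Decoration.flip : Decoration → Decoration
  | .down => .up
  | .up => .down
  | d => d

@[simp]
theorem Decoration.flip_flip (d : Decoration) : d.flip.flip = d := by
  cases d <;> rfl

@[simp]
theorem Decoration.flip_eq_up_or_updown {d : Decoration} :
    d.flip = .up ∨ d.flip = .updown ↔ d = .down ∨ d = .updown := by
  cases d <;> simp [Decoration.flip]

@[simp]
theorem Decoration.flip_eq_down_or_updown {d : Decoration} :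
    d.flip = .down ∨ d.flip = .updown ↔ d = .up ∨ d = .updown := by
  cases d <;> simp [Decoration.flip]

section Reverse
variable {n : ℕ} {δ : Fin n → Decoration}

@[simp]
theorem mul_revPerm_mul_revPerm (σ : Perm (Fin n)) : σ * Fin.revPerm * Fin.revPerm = σ := by
  ext; simp

theorem mem_invSet_mul_revPerm {σ : Perm (Fin n)} {a b : Fin n} :
    (a, b) ∈ invSet n (σ * Fin.revPerm) ↔ a < b ∧ (a, b) ∉ invSet n σ := by
  simp only [mem_invSet, mul_inv_rev, Perm.mul_apply, Perm.coe_inv, Fin.revPerm_symm,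
    Fin.revPerm_apply, Fin.rev_lt_rev, not_and, not_lt]
  exact and_congr_right fun hab =>
    ⟨fun h _ => h.le, fun h => (h hab).lt_of_ne (σ.symm.injective.ne hab.ne)⟩

theorem invSet_mul_revPerm_subset_iff {σ τ : Perm (Fin n)} :
    invSet n (σ * Fin.revPerm) ⊆ invSet n (τ * Fin.revPerm) ↔ invSet n τ ⊆ invSet n σ := by
  refine ⟨fun h ⟨a, b⟩ hτ => ?_, fun h ⟨a, b⟩ hσ => ?_⟩
  · by_contra hσ
    exact (mem_invSet_mul_revPerm.1 (h (mem_invSet_mul_revPerm.2 ⟨hτ.1, hσ⟩))).2 hτ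
  · rw [mem_invSet_mul_revPerm] at hσ ⊢
    exact ⟨hσ.1, fun hτ => hσ.2 (h hτ)⟩

theorem IsWeakGLB.isWeakLUB_mul_revPerm {μ σ τ : Perm (Fin n)} (h : IsWeakGLB n μ σ τ) :
    IsWeakLUB n (μ * Fin.revPerm) (σ * Fin.revPerm) (τ * Fin.revPerm) := by
  simp only [IsWeakLUB, invSet_mul_revPerm_subset_iff]
  refine ⟨h.1, h.2.1, fun ρ hσ hτ => ?_⟩
  rw [← mul_revPerm_mul_revPerm ρ, invSet_mul_revPerm_subset_iff] at hσ hτ ⊢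
  exact h.2.2 _ hσ hτ

theorem PermutreeMove.mul_revPerm {σ τ : Perm (Fin n)} (hm : PermutreeMove n δ σ τ) :
    PermutreeMove n (Decoration.flip ∘ δ) (τ * Fin.revPerm) (σ * Fin.revPerm) := by
  obtain ⟨i, j, hij, hlt, rfl, b, hab, hbc, hb⟩ := permutreeMove_iff.1 hm
  have hasc := notMem_invSet_of_lt σ (i := i) (j := j) (by omega)
  have htrans := (isInversionSet_invSet σ).trans
  have hinv (x y : Fin n) : (x, y) ∈ invSet n (σ * swap i j * Fin.revPerm) ↔
      x < y ∧ (x, y) ∉ invSet n σ ∧ (x, y) ≠ (σ i, σ j) := by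
    rw [mem_invSet_mul_revPerm, invSet_mul_swap hij hlt]
    simp only [Set.mem_union, Set.mem_singleton_iff, not_or]
  refine permutreeMove_iff.2 ⟨j.rev, i.rev, ?_, by simpa using hlt, ?_, b, by simpa using hab,
    by simpa using hbc, ?_⟩
  · simp only [Fin.val_rev]
    omega
  · rw [mul_assoc _ Fin.revPerm, mul_swap_eq_swap_mul Fin.revPerm]
    simp [mul_assoc, swap_comm j i]
  · simp only [Perm.mul_apply, Fin.revPerm_apply, Fin.rev_rev, swap_apply_left,
      swap_apply_right, Function.comp_apply, Decoration.flip_eq_up_or_updown,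
      Decoration.flip_eq_down_or_updown, hinv]
    rcases hb with ⟨hδ, hb⟩ | ⟨hδ, hb⟩
    · exact .inr ⟨hδ, hab, fun h => hasc (htrans _ _ _ h hb), by simp [hbc.ne]⟩
    · exact .inl ⟨hδ, hbc, fun h => hasc (htrans _ _ _ hb h), by simp [hab.ne']⟩

theorem PermutreeCong.mul_revPerm {σ τ : Perm (Fin n)} (h : PermutreeCong n δ σ τ) :
    PermutreeCong n (Decoration.flip ∘ δ) (σ * Fin.revPerm) (τ * Fin.revPerm) := by
  induction h with
  | rel hm => exact .symm (.rel hm.mul_revPerm)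
  | refl σ => exact .refl _
  | symm _ ih => exact ih.symm
  | trans _ _ ih₁ ih₂ => exact ih₁.trans ih₂

theorem PermutreeCong.isWeakGLB {σ σ' τ τ' μ μ' : Perm (Fin n)}
    (hσ : PermutreeCong n δ σ σ') (hτ : PermutreeCong n δ τ τ')
    (h : IsWeakGLB n μ σ τ) (h' : IsWeakGLB n μ' σ' τ') : PermutreeCong n δ μ μ' := by
  have := ((hσ.mul_revPerm.isWeakLUB hτ.mul_revPerm h.isWeakLUB_mul_revPerm
    h'.isWeakLUB_mul_revPerm).mul_revPerm)
  simpa [Function.comp_def] using this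

end Reverse

/-- The `δ`-permutree congruence is a lattice congruence of the right weak
order: least upper bounds (resp. greatest lower bounds) of congruent pairs
are congruent. -/
theorem permutree_congruence_is_lattice_congruence (n : ℕ)
    (δ : Fin n → Decoration) (σ σ' τ τ' : Equiv.Perm (Fin n))
    (h1 : PermutreeCong n δ σ σ') (h2 : PermutreeCong n δ τ τ') :
    (∀ μ μ' : Equiv.Perm (Fin n),
      IsWeakLUB n μ σ τ → IsWeakLUB n μ' σ' τ' → PermutreeCong n δ μ μ') ∧
    (∀ μ μ' : Equiv.Perm (Fin n),
      IsWeakGLB n μ σ τ → IsWeakGLB n μ' σ' τ' → PermutreeCong n δ μ μ') :=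
  ⟨fun _ _ => h1.isWeakLUB h2, fun _ _ => h1.isWeakGLB h2⟩
end

section
/- Fix n and a decoration δ : {1,…,n} → {none, down, up, updown}. For every permutation σ of {1,…,n}, there is exactly one permutation τ with τ ≡_δ σ such that τ has no occurrence of a pattern cab with δ(b) ∈ {down, updown} (that is, no positions p < q < r with τ(p) = c, τ(q) = a, τ(r) = b and a < b < c and δ(b) ∈ {down, updown}) and no occurrence of a pattern bca with δ(b) ∈ {up, updown} (no positions p < q < r with τ(p) = b, τ(q) = c, τ(r) = a, a < b < c and δ(b) ∈ {up, updown}); moreover this τ satisfies inv(τ) ⊆ inv(σ), i.e., τ is the minimal element of its congruence class in the right weak order. -/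
/-- `τ` avoids the patterns `cab` with `δ b ∈ {down, updown}` (no positions
`p < q < r` with `τ q < τ r < τ p` and `δ (τ r)` a down decoration) and `bca`
with `δ b ∈ {up, updown}` (no positions `p < q < r` with `τ r < τ p < τ q`
and `δ (τ p)` an up decoration). -/
def PermutreePatternAvoiding (n : ℕ) (δ : Fin n → Decoration)
    (τ : Equiv.Perm (Fin n)) : Prop :=
  (¬ ∃ p q r : Fin n, p < q ∧ q < r ∧ τ q < τ r ∧ τ r < τ p ∧
      (δ (τ r) = Decoration.down ∨ δ (τ r) = Decoration.updown)) ∧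
  (¬ ∃ p q r : Fin n, p < q ∧ q < r ∧ τ r < τ p ∧ τ p < τ q ∧
      (δ (τ p) = Decoration.up ∨ δ (τ p) = Decoration.updown))

/-! Orient the exchanges so that they remove an inversion. The resulting rewriting system
terminates, since each step shrinks the inversion set, and it is locally confluent: exchanges
at disjoint positions commute, and two exchanges at overlapping positions `i, i+1, i+2` are
joined by the braid relation, because every value that licenses one of them lies outside
these three positions and therefore keeps licensing the exchanges inside them. By Newman's
lemma every congruence class has a unique normal form, reached from each of its elements by
inversion-removing steps, hence below all of them in the weak order. A permutation is a normal
form exactly when it avoids the two patterns: an occurrence of `cab` or `bca` yields, by a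
discrete intermediate value argument, an adjacent descent that the letter `b` licenses. -/

open Relation

theorem Relation.newman {α : Type*} {r : α → α → Prop} (hwf : WellFounded (flip r))
    (hlc : ∀ a b c, r a b → r a c → Join (ReflTransGen r) b c) {a b c : α}
    (hab : ReflTransGen r a b) (hac : ReflTransGen r a c) : Join (ReflTransGen r) b c := by
  induction a using hwf.induction generalizing b c with
  | _ a ih =>
  rcases hab.cases_head with rfl | ⟨b₁, hab₁, hb₁b⟩
  · exact ⟨c, hac, .refl⟩
  rcases hac.cases_head with rfl | ⟨c₁, hac₁, hc₁c⟩
  · exact ⟨b, .refl, hab⟩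
  obtain ⟨d, hb₁d, hc₁d⟩ := hlc a b₁ c₁ hab₁ hac₁
  obtain ⟨e, hbe, hde⟩ := ih b₁ hab₁ hb₁b hb₁d
  obtain ⟨f, hcf, hef⟩ := ih c₁ hac₁ hc₁c (hc₁d.trans hde)
  exact ⟨f, hbe.trans hef, hcf⟩

theorem Nat.exists_step_of_le {P : ℕ → Prop} {p q : ℕ} (hpq : p ≤ q) (hp : P p) (hq : ¬ P q) :
    ∃ k, p ≤ k ∧ k + 1 ≤ q ∧ P k ∧ ¬ P (k + 1) := by
  induction hpq with
  | refl => exact absurd hp hq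
  | @step m hpm ih =>
    by_cases hm : P m
    · exact ⟨m, hpm, le_refl _, hm, hq⟩
    · obtain ⟨k, hpk, hkm, hk, hk'⟩ := ih hm
      exact ⟨k, hpk, hkm.trans m.le_succ, hk, hk'⟩

theorem Equiv.swap_apply_iff {α : Type*} [DecidableEq α] {P : α → Prop} {x y : α}
    (h : P x ↔ P y) (p : α) : P (swap x y p) ↔ P p := by
  rw [swap_apply_def]
  split_ifs <;> subst_vars <;> tauto

theorem Equiv.swap_mul_swap_braid {α : Type*} [DecidableEq α] {x y z : α} (hxy : x ≠ y)
    (hxz : x ≠ z) (hyz : y ≠ z) :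
    swap x y * swap y z * swap x y = swap y z * swap x y * swap y z := by
  rw [swap_mul_swap_mul_swap hxy hxz, swap_comm x y, swap_comm y z,
    swap_mul_swap_mul_swap hyz.symm hxz.symm, swap_comm]

namespace Permutree

variable {n : ℕ}

theorem swap_lt_swap_of_lt {i j : Fin n} (hij : (i : ℕ) + 1 = j) {x y : Fin n} (hxy : x < y)
    (hne : ¬(x = i ∧ y = j)) : Equiv.swap i j x < Equiv.swap i j y := by
  rw [Equiv.swap_apply_def, Equiv.swap_apply_def]
  simp only [Fin.ext_iff, Fin.lt_def] at *
  split_ifs <;> omega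

theorem exists_adjacent_of_lt_of_gt (τ : Equiv.Perm (Fin n)) {b p q : Fin n} (hpq : p < q)
    (hp : b < τ p) (hq : τ q < b) (hb : τ⁻¹ b < p ∨ q < τ⁻¹ b) :
    ∃ i j : Fin n, (i : ℕ) + 1 = j ∧ p ≤ i ∧ j ≤ q ∧ τ j < b ∧ b < τ i := by
  let P : ℕ → Prop := fun k => ∃ x : Fin n, (x : ℕ) = k ∧ b < τ x
  have hPq : ¬ P q := by
    rintro ⟨x, hx, hbx⟩
    exact (Fin.ext hx ▸ hq).not_gt hbx
  obtain ⟨k, hpk, hkq, ⟨i, rfl, hbi⟩, hPk⟩ :=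
    Nat.exists_step_of_le (le_of_lt hpq) ⟨p, rfl, hp⟩ hPq
  let j : Fin n := ⟨i + 1, by omega⟩
  have hτj : τ j ≠ b := by
    intro h
    rw [← h, Equiv.Perm.inv_eq_iff_eq.mpr rfl] at hb
    simp only [Fin.lt_def, j] at hb
    omega
  exact ⟨i, j, rfl, hpk, hkq, lt_of_le_of_ne (not_lt.mp fun h => hPk ⟨j, rfl, h⟩) hτj, hbi⟩

variable (δ : Fin n → Decoration)

/-- The letter `b` licenses, in `τ`, exchanges inside the window of positions `[lo, hi]`. -/
def Witness (τ : Equiv.Perm (Fin n)) (lo hi b : Fin n) : Prop :=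
  ((δ b = Decoration.down ∨ δ b = Decoration.updown) ∧ hi < τ⁻¹ b) ∨
    ((δ b = Decoration.up ∨ δ b = Decoration.updown) ∧ τ⁻¹ b < lo)

def Descent (τ : Equiv.Perm (Fin n)) (i j : Fin n) : Prop :=
  (i : ℕ) + 1 = j ∧ τ j < τ i ∧ ∃ b, τ j < b ∧ b < τ i ∧ Witness δ τ i j b

variable {δ}

theorem Witness.anti {τ : Equiv.Perm (Fin n)} {lo hi lo' hi' b : Fin n}
    (hw : Witness δ τ lo hi b) (hlo : lo ≤ lo') (hhi : hi' ≤ hi) : Witness δ τ lo' hi' b := by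
  rcases hw with ⟨hd, hp⟩ | ⟨hu, hp⟩
  · exact .inl ⟨hd, hhi.trans_lt hp⟩
  · exact .inr ⟨hu, hp.trans_le hlo⟩

theorem Witness.extend_right {τ : Equiv.Perm (Fin n)} {lo hi hi' b : Fin n}
    (hw : Witness δ τ lo hi b) (hhi : (hi : ℕ) + 1 = hi') (hb : b ≠ τ hi') :
    Witness δ τ lo hi' b := by
  have hp : τ⁻¹ b ≠ hi' := fun h => hb (h ▸ (τ.apply_symm_apply b).symm)
  rcases hw with ⟨hd, hp'⟩ | ⟨hu, hp'⟩
  · exact .inl ⟨hd, lt_of_le_of_ne (Fin.le_def.mpr (by rw [Fin.lt_def] at hp'; omega)) hp.symm⟩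
  · exact .inr ⟨hu, hp'⟩

theorem Witness.extend_left {τ : Equiv.Perm (Fin n)} {lo hi lo' b : Fin n}
    (hw : Witness δ τ lo hi b) (hlo : (lo' : ℕ) + 1 = lo) (hb : b ≠ τ lo') :
    Witness δ τ lo' hi b := by
  have hp : τ⁻¹ b ≠ lo' := fun h => hb (h ▸ (τ.apply_symm_apply b).symm)
  rcases hw with ⟨hd, hp'⟩ | ⟨hu, hp'⟩
  · exact .inl ⟨hd, hp'⟩
  · exact .inr ⟨hu, lt_of_le_of_ne (Fin.le_def.mpr (by rw [Fin.lt_def] at hp'; omega)) hp⟩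

theorem Witness.mul_swap_iff {τ : Equiv.Perm (Fin n)} {lo hi b x y : Fin n}
    (hlo : x < lo ↔ y < lo) (hhi : hi < x ↔ hi < y) :
    Witness δ (τ * Equiv.swap x y) lo hi b ↔ Witness δ τ lo hi b := by
  simp only [Witness, mul_inv_rev, Equiv.swap_inv, Equiv.Perm.mul_apply,
    Equiv.swap_apply_iff (P := (· < lo)) hlo, Equiv.swap_apply_iff (P := (hi < ·)) hhi]

theorem Witness.mul_swap_iff_of_mem_Icc {τ : Equiv.Perm (Fin n)} {lo hi b x y : Fin n}
    (hx : x ∈ Set.Icc lo hi) (hy : y ∈ Set.Icc lo hi) :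
    Witness δ (τ * Equiv.swap x y) lo hi b ↔ Witness δ τ lo hi b :=
  Witness.mul_swap_iff (iff_of_false hx.1.not_gt hy.1.not_gt)
    (iff_of_false hx.2.not_gt hy.2.not_gt)

theorem permutreeMove_iff {σ τ : Equiv.Perm (Fin n)} :
    PermutreeMove n δ σ τ ↔ ∃ i j, Descent δ τ i j ∧ σ = τ * Equiv.swap i j := by
  have hw : ∀ {ρ : Equiv.Perm (Fin n)} {i j b : Fin n}, (i : ℕ) + 1 = j →
      (Witness δ (ρ * Equiv.swap i j) i j b ↔ Witness δ ρ i j b) := fun hij =>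
    Witness.mul_swap_iff_of_mem_Icc (Set.left_mem_Icc.mpr (Fin.le_def.mpr (by omega)))
      (Set.right_mem_Icc.mpr (Fin.le_def.mpr (by omega)))
  constructor
  · rintro ⟨i, j, hij, hlt, rfl, b, hb, hb', hbw⟩
    exact ⟨i, j, ⟨hij, by simpa using hlt, b, by simpa using hb, by simpa using hb',
      (hw hij).mpr hbw⟩, by simp [mul_assoc]⟩
  · rintro ⟨i, j, ⟨hij, hlt, b, hb, hb', hbw⟩, rfl⟩
    exact ⟨i, j, hij, by simpa using hlt, by simp [mul_assoc], b, by simpa using hb,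
      by simpa using hb', (hw hij).mpr hbw⟩

theorem Descent.permutreeMove {τ : Equiv.Perm (Fin n)} {i j : Fin n} (h : Descent δ τ i j) :
    PermutreeMove n δ (τ * Equiv.swap i j) τ :=
  permutreeMove_iff.mpr ⟨i, j, h, rfl⟩

theorem Descent.of_witness {τ : Equiv.Perm (Fin n)} {lo hi i j b : Fin n}
    (hij : (i : ℕ) + 1 = j) (hlo : lo ≤ i) (hhi : j ≤ hi) (hb : τ j < b) (hb' : b < τ i)
    (hw : Witness δ τ lo hi b) : Descent δ τ i j :=
  ⟨hij, hb.trans hb', b, hb, hb', hw.anti hlo hhi⟩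

theorem Descent.mul_swap {τ : Equiv.Perm (Fin n)} {i j x y : Fin n} (h : Descent δ τ i j)
    (hxy : (x < i ∧ y < i) ∨ (j < x ∧ j < y)) : Descent δ (τ * Equiv.swap x y) i j := by
  obtain ⟨hij, -, b, hb, hb', hw⟩ := h
  have hxy' : ((x : ℕ) < i ∧ (y : ℕ) < i) ∨ ((j : ℕ) < x ∧ (j : ℕ) < y) := hxy
  have hi : Equiv.swap x y i = i :=
    Equiv.swap_apply_of_ne_of_ne (Fin.ne_of_val_ne (by omega)) (Fin.ne_of_val_ne (by omega))
  have hj : Equiv.swap x y j = j :=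
    Equiv.swap_apply_of_ne_of_ne (Fin.ne_of_val_ne (by omega)) (Fin.ne_of_val_ne (by omega))
  have hw' : Witness δ (τ * Equiv.swap x y) i j b := by
    refine (Witness.mul_swap_iff ?_ ?_).mpr hw <;> simp only [Fin.lt_def] <;> omega
  exact ⟨hij, by simpa [hi, hj] using hb.trans hb', b, by simpa [hj] using hb,
    by simpa [hi] using hb', hw'⟩

theorem not_permutreePatternAvoiding_of_descent {τ : Equiv.Perm (Fin n)} {i j : Fin n}
    (h : Descent δ τ i j) : ¬ PermutreePatternAvoiding n δ τ := by
  obtain ⟨hij, -, b, hb, hb', hw⟩ := h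
  have hlt : i < j := Fin.lt_def.mpr (by omega)
  have hτb : τ (τ⁻¹ b) = b := τ.apply_symm_apply b
  rintro ⟨hcab, hbca⟩
  rcases hw with ⟨hδ, hp⟩ | ⟨hδ, hp⟩
  · exact hcab ⟨i, j, τ⁻¹ b, hlt, hp, by rwa [hτb], by rwa [hτb], by rwa [hτb]⟩
  · exact hbca ⟨τ⁻¹ b, i, j, hp, hlt, by rwa [hτb], by rwa [hτb], by rwa [hτb]⟩

theorem exists_descent_of_not_permutreePatternAvoiding {τ : Equiv.Perm (Fin n)}
    (h : ¬ PermutreePatternAvoiding n δ τ) : ∃ i j, Descent δ τ i j := by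
  have hτ : ∀ x, τ⁻¹ (τ x) = x := fun x => Equiv.Perm.inv_eq_iff_eq.mpr rfl
  rw [PermutreePatternAvoiding, not_and_or, not_not, not_not] at h
  rcases h with ⟨p, q, r, hpq, hqr, hqr', hrp, hδ⟩ | ⟨p, q, r, hpq, hqr, hrp, hpq', hδ⟩
  · obtain ⟨i, j, hij, -, hjq, hj, hi⟩ :=
      exists_adjacent_of_lt_of_gt τ hpq hrp hqr' (.inr (by rwa [hτ]))
    exact ⟨i, j, hij, hj.trans hi, τ r, hj, hi, .inl ⟨hδ, by rw [hτ]; exact hjq.trans_lt hqr⟩⟩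
  · obtain ⟨i, j, hij, hqi, -, hj, hi⟩ :=
      exists_adjacent_of_lt_of_gt τ hqr hpq' hrp (.inl (by rwa [hτ]))
    exact ⟨i, j, hij, hj.trans hi, τ p, hj, hi, .inr ⟨hδ, by rw [hτ]; exact hpq.trans_le hqi⟩⟩

theorem invSet_ssubset_invSet_mul_swap {σ : Equiv.Perm (Fin n)} {i j : Fin n}
    (hij : (i : ℕ) + 1 = j) (hlt : σ i < σ j) : invSet n σ ⊂ invSet n (σ * Equiv.swap i j) := by
  have hinv : ∀ v, (σ * Equiv.swap i j)⁻¹ v = Equiv.swap i j (σ⁻¹ v) := by simp [mul_inv_rev]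
  have hle : i ≤ j := Fin.le_def.mpr (by omega)
  refine (Set.ssubset_iff_of_subset ?_).mpr ⟨(σ i, σ j), ?_, ?_⟩
  · rintro ⟨a, c⟩ ⟨hac, hca⟩
    refine ⟨hac, ?_⟩
    rw [hinv, hinv]
    refine swap_lt_swap_of_lt hij hca fun ⟨hc, ha⟩ => ?_
    rw [Equiv.Perm.inv_eq_iff_eq] at hc ha
    exact hac.not_gt (ha ▸ hc ▸ hlt)
  · simpa [invSet, hinv] using ⟨hlt, Fin.lt_def.mpr (by omega)⟩
  · simpa [invSet] using fun _ => hle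

theorem invSet_ssubset_of_permutreeMove {σ τ : Equiv.Perm (Fin n)}
    (h : PermutreeMove n δ σ τ) : invSet n σ ⊂ invSet n τ := by
  obtain ⟨i, j, hij, hlt, rfl, -⟩ := h
  exact invSet_ssubset_invSet_mul_swap hij hlt

theorem wellFounded_permutreeMove : WellFounded (PermutreeMove n δ) :=
  Subrelation.wf invSet_ssubset_of_permutreeMove (InvImage.wf (invSet n) wellFounded_lt)

theorem Descent.join_of_lt {τ : Equiv.Perm (Fin n)} {i j k l : Fin n} (h₁ : Descent δ τ i j)
    (h₂ : Descent δ τ k l) (hjk : j < k) :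
    Join (ReflTransGen (flip (PermutreeMove n δ))) (τ * Equiv.swap i j)
      (τ * Equiv.swap k l) := by
  have hij : (i : ℕ) + 1 = j := h₁.1
  have hkl : (k : ℕ) + 1 = l := h₂.1
  have hjk' : (j : ℕ) < k := hjk
  have hcomm : Equiv.swap i j * Equiv.swap k l = Equiv.swap k l * Equiv.swap i j :=
    (Equiv.Perm.disjoint_swap_swap (by simp [Fin.ext_iff]; omega)).commute.eq
  refine ⟨τ * Equiv.swap i j * Equiv.swap k l,
    .single (h₂.mul_swap (.inl ⟨Fin.lt_def.mpr (by omega), hjk⟩)).permutreeMove, ?_⟩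
  rw [mul_assoc, hcomm, ← mul_assoc]
  exact .single
    (h₁.mul_swap (.inr ⟨Fin.lt_def.mpr (by omega), Fin.lt_def.mpr (by omega)⟩)).permutreeMove

theorem reflTransGen_braid_left {τ : Equiv.Perm (Fin n)} {i j l b : Fin n}
    (hij : (i : ℕ) + 1 = j) (hjl : (j : ℕ) + 1 = l) (hji : τ j < τ i) (hb : τ l < b)
    (hb' : b < τ j) (hw : Witness δ τ i l b) :
    ReflTransGen (flip (PermutreeMove n δ)) (τ * Equiv.swap i j)
      (τ * Equiv.swap i j * Equiv.swap j l * Equiv.swap i j) := by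
  have hi : i ∈ Set.Icc i l := ⟨le_rfl, Fin.le_def.mpr (by omega)⟩
  have hj : j ∈ Set.Icc i l := ⟨Fin.le_def.mpr (by omega), Fin.le_def.mpr (by omega)⟩
  have hl : l ∈ Set.Icc i l := ⟨Fin.le_def.mpr (by omega), le_rfl⟩
  have hl_fix : Equiv.swap i j l = l :=
    Equiv.swap_apply_of_ne_of_ne (Fin.ne_of_val_ne (by omega)) (Fin.ne_of_val_ne (by omega))
  have hi_fix : Equiv.swap j l i = i :=
    Equiv.swap_apply_of_ne_of_ne (Fin.ne_of_val_ne (by omega)) (Fin.ne_of_val_ne (by omega))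
  have hw₁ := (Witness.mul_swap_iff_of_mem_Icc (τ := τ) hi hj).mpr hw
  have hw₂ := (Witness.mul_swap_iff_of_mem_Icc hj hl).mpr hw₁
  refine .head (b := τ * Equiv.swap i j * Equiv.swap j l)
    (Descent.of_witness hjl hj.1 hl.2 ?_ ?_ hw₁).permutreeMove
    (.single (Descent.of_witness hij hi.1 hj.2 ?_ ?_ hw₂).permutreeMove)
  · simpa [hl_fix, hi_fix] using hb
  · simpa [hl_fix, hi_fix] using hb'.trans hji
  · simpa [hl_fix, hi_fix] using hb
  · simpa [hl_fix, hi_fix] using hb'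

theorem reflTransGen_braid_right {τ : Equiv.Perm (Fin n)} {i j l b : Fin n}
    (hij : (i : ℕ) + 1 = j) (hjl : (j : ℕ) + 1 = l) (hlj : τ l < τ j) (hb : τ j < b)
    (hb' : b < τ i) (hw : Witness δ τ i l b) :
    ReflTransGen (flip (PermutreeMove n δ)) (τ * Equiv.swap j l)
      (τ * Equiv.swap j l * Equiv.swap i j * Equiv.swap j l) := by
  have hi : i ∈ Set.Icc i l := ⟨le_rfl, Fin.le_def.mpr (by omega)⟩
  have hj : j ∈ Set.Icc i l := ⟨Fin.le_def.mpr (by omega), Fin.le_def.mpr (by omega)⟩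
  have hl : l ∈ Set.Icc i l := ⟨Fin.le_def.mpr (by omega), le_rfl⟩
  have hl_fix : Equiv.swap i j l = l :=
    Equiv.swap_apply_of_ne_of_ne (Fin.ne_of_val_ne (by omega)) (Fin.ne_of_val_ne (by omega))
  have hi_fix : Equiv.swap j l i = i :=
    Equiv.swap_apply_of_ne_of_ne (Fin.ne_of_val_ne (by omega)) (Fin.ne_of_val_ne (by omega))
  have hw₁ := (Witness.mul_swap_iff_of_mem_Icc (τ := τ) hj hl).mpr hw
  have hw₂ := (Witness.mul_swap_iff_of_mem_Icc hi hj).mpr hw₁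
  refine .head (b := τ * Equiv.swap j l * Equiv.swap i j)
    (Descent.of_witness hij hi.1 hj.2 ?_ ?_ hw₁).permutreeMove
    (.single (Descent.of_witness hjl hj.1 hl.2 ?_ ?_ hw₂).permutreeMove)
  · simpa [hl_fix, hi_fix] using hlj.trans hb
  · simpa [hl_fix, hi_fix] using hb'
  · simpa [hl_fix, hi_fix] using hb
  · simpa [hl_fix, hi_fix] using hb'

theorem Descent.join_braid {τ : Equiv.Perm (Fin n)} {i j l : Fin n} (h₁ : Descent δ τ i j)
    (h₂ : Descent δ τ j l) :
    Join (ReflTransGen (flip (PermutreeMove n δ))) (τ * Equiv.swap i j)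
      (τ * Equiv.swap j l) := by
  obtain ⟨hij, hji, b₁, hb₁, hb₁', hw₁⟩ := h₁
  obtain ⟨hjl, hlj, b₂, hb₂, hb₂', hw₂⟩ := h₂
  have hbraid : τ * Equiv.swap i j * Equiv.swap j l * Equiv.swap i j =
      τ * Equiv.swap j l * Equiv.swap i j * Equiv.swap j l := by
    simpa only [mul_assoc] using congrArg (τ * ·) (Equiv.swap_mul_swap_braid
      (Fin.ne_of_val_ne (by omega)) (Fin.ne_of_val_ne (by omega)) (Fin.ne_of_val_ne (by omega)))
  refine ⟨_, reflTransGen_braid_left hij hjl hji hb₂ hb₂'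
    (hw₂.extend_left hij (hb₂'.trans hji).ne), ?_⟩
  rw [hbraid]
  exact reflTransGen_braid_right hij hjl hlj hb₁ hb₁'
    (hw₁.extend_right hjl (hlj.trans hb₁).ne')

theorem permutreeMove_locallyConfluent {τ σ₁ σ₂ : Equiv.Perm (Fin n)}
    (h₁ : PermutreeMove n δ σ₁ τ) (h₂ : PermutreeMove n δ σ₂ τ) :
    Join (ReflTransGen (flip (PermutreeMove n δ))) σ₁ σ₂ := by
  obtain ⟨i, j, hd₁, rfl⟩ := permutreeMove_iff.mp h₁
  obtain ⟨k, l, hd₂, rfl⟩ := permutreeMove_iff.mp h₂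
  clear h₁ h₂
  wlog hik : i ≤ k generalizing i j k l
  · obtain ⟨ρ, h₁, h₂⟩ := this k l hd₂ i j hd₁ (le_of_not_ge hik)
    exact ⟨ρ, h₂, h₁⟩
  have hij : (i : ℕ) + 1 = j := hd₁.1
  have hkl : (k : ℕ) + 1 = l := hd₂.1
  have hik' : (i : ℕ) ≤ k := hik
  obtain rfl | rfl | hjk : k = i ∨ k = j ∨ j < k := by
    simp only [Fin.ext_iff, Fin.lt_def]; omega
  · obtain rfl : l = j := Fin.ext (by omega)
    exact ⟨_, .refl, .refl⟩
  · exact hd₁.join_braid hd₂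
  · exact hd₁.join_of_lt hd₂ hjk

theorem PermutreeCong.join {σ τ : Equiv.Perm (Fin n)} (h : PermutreeCong n δ σ τ) :
    Join (ReflTransGen (flip (PermutreeMove n δ))) σ τ := by
  have hequiv : Equivalence (Join (ReflTransGen (flip (PermutreeMove n δ)))) :=
    equivalence_join fun _ _ _ => newman wellFounded_permutreeMove
      fun _ _ _ => permutreeMove_locallyConfluent
  induction h with
  | rel h => exact ⟨_, .refl, .single h⟩
  | refl σ => exact hequiv.refl σ
  | symm _ ih => exact hequiv.symm ih
  | trans _ _ ih₁ ih₂ => exact hequiv.trans ih₁ ih₂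

theorem PermutreeCong.of_reflTransGen {σ τ : Equiv.Perm (Fin n)}
    (h : ReflTransGen (flip (PermutreeMove n δ)) σ τ) : PermutreeCong n δ τ σ := by
  induction h with
  | refl => exact .refl σ
  | tail _ hstep ih => exact (PermutreeCong.rel hstep).trans ih

theorem invSet_subset_of_reflTransGen {σ τ : Equiv.Perm (Fin n)}
    (h : ReflTransGen (flip (PermutreeMove n δ)) σ τ) : invSet n τ ⊆ invSet n σ := by
  induction h with
  | refl => exact subset_rfl
  | tail _ hstep ih => exact (invSet_ssubset_of_permutreeMove hstep).subset.trans ih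

theorem exists_reflTransGen_permutreePatternAvoiding (σ : Equiv.Perm (Fin n)) :
    ∃ τ, ReflTransGen (flip (PermutreeMove n δ)) σ τ ∧ PermutreePatternAvoiding n δ τ := by
  induction σ using (wellFounded_permutreeMove (n := n) (δ := δ)).induction with
  | _ σ ih =>
  by_cases hσ : PermutreePatternAvoiding n δ σ
  · exact ⟨σ, .refl, hσ⟩
  obtain ⟨i, j, hd⟩ := exists_descent_of_not_permutreePatternAvoiding hσ
  obtain ⟨τ, hτ, hτ'⟩ := ih _ hd.permutreeMove
  exact ⟨τ, .head hd.permutreeMove hτ, hτ'⟩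

theorem eq_of_reflTransGen_of_permutreePatternAvoiding {τ ρ : Equiv.Perm (Fin n)}
    (hτ : PermutreePatternAvoiding n δ τ) (h : ReflTransGen (flip (PermutreeMove n δ)) τ ρ) :
    ρ = τ := by
  rcases h.cases_head with rfl | ⟨σ, hσ, -⟩
  · rfl
  obtain ⟨i, j, hd, -⟩ := permutreeMove_iff.mp hσ
  exact absurd hτ (not_permutreePatternAvoiding_of_descent hd)

end Permutree

open Permutree in
/-- Every `δ`-permutree congruence class contains exactly one permutation
avoiding the patterns `cab` (with `δ b ∈ {down, updown}`) and `bca` (with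
`δ b ∈ {up, updown}`); moreover this permutation is the minimal element of
its class in the right weak order. -/
theorem permutree_class_unique_minimal (n : ℕ) (δ : Fin n → Decoration)
    (σ : Equiv.Perm (Fin n)) :
    ∃ τ : Equiv.Perm (Fin n),
      (PermutreeCong n δ τ σ ∧ PermutreePatternAvoiding n δ τ ∧
        invSet n τ ⊆ invSet n σ) ∧
      ∀ τ' : Equiv.Perm (Fin n),
        PermutreeCong n δ τ' σ → PermutreePatternAvoiding n δ τ' → τ' = τ := by
  obtain ⟨τ, hστ, hτ⟩ := exists_reflTransGen_permutreePatternAvoiding (δ := δ) σ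
  refine ⟨τ, ⟨.of_reflTransGen hστ, hτ, invSet_subset_of_reflTransGen hστ⟩, fun τ' hτ'σ hτ' => ?_⟩
  obtain ⟨ρ, hτ'ρ, hτρ⟩ := (hτ'σ.trans (.symm (.of_reflTransGen hστ))).join
  rw [← eq_of_reflTransGen_of_permutreePatternAvoiding hτ' hτ'ρ,
    eq_of_reflTransGen_of_permutreePatternAvoiding hτ hτρ]
end

section
/- Fix n ≥ 3 and j with 2 ≤ j ≤ n−1, and let U(j) be the deterministic automaton over the alphabet {s_1,…,s_{n−1}} with states H_{j−1},…,H_{n−1}, I_{j−1},…,I_{n−1} and a sink state ⊥; initial state H_{j−1}; accepting states all the H_k and I_k; and transitions: from H_k the letter s_k leads to I_k, the letter s_{k+1} leads to H_{k+1} (when k+1 ≤ n−1); from I_k the letter s_{k+1} leads to ⊥ (when k+1 ≤ n−1); every other letter loops on the current state, and ⊥ is absorbing. Then for a permutation σ of {1,…,n}: σ admits a reduced word accepted by U(j) if and only if there are no positions p < q < r with σ(p) = j, σ(q) > j and σ(r) < j (i.e., σ avoids the pattern bca with b = j). -/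
/-- States of the automaton `U(j)`: states `H k`, states `I k`, and a
rejecting sink. -/
inductive AState : Type
  | H : ℕ → AState
  | I : ℕ → AState
  | sink : AState
  deriving DecidableEq

/-- The transition function of the automaton `U(j)`: reading letter `s_l`
(encoded by its index `l`), from `H k` the letter `s_k` leads to `I k` and the
letter `s_{k+1}` leads to `H (k+1)`; from `I k` the letter `s_{k+1}` leads to
the sink; every other letter loops, and the sink is absorbing. -/
def aStep : AState → ℕ → AState
  | AState.H k, l =>
      if l = k then AState.I k else if l = k + 1 then AState.H (k + 1) else AState.H k
  | AState.I k, l => if l = k + 1 then AState.sink else AState.I k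
  | AState.sink, _ => AState.sink

/-- A word `w` over the alphabet `{s_1, …, s_{n-1}}` (letters encoded by their
indices) is accepted by `U(j)`: reading it from the initial state `H (j-1)`
does not end in the sink (all states `H k`, `I k` are accepting). -/
def AcceptedByU (j : ℕ) (w : List ℕ) : Prop :=
  w.foldl aStep (AState.H (j - 1)) ≠ AState.sink

/-- The adjacent transposition `s_l` of `{1,…,n}` exchanging the values `l`
and `l+1` (which on `Fin n`, whose element `i` encodes the value `i+1`,
swaps the indices `l-1` and `l`). -/
def adjTransposition (n : ℕ) (l : ℕ) : Equiv.Perm (Fin n) :=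
  if h : 1 ≤ l ∧ l < n then Equiv.swap ⟨l - 1, by omega⟩ ⟨l, h.2⟩ else 1

/-- The number of inversions of `σ`: pairs of positions `p < q` with
`σ p > σ q`. -/
def invCount (n : ℕ) (σ : Equiv.Perm (Fin n)) : ℕ :=
  (Finset.univ.filter fun p : Fin n × Fin n => p.1 < p.2 ∧ σ p.2 < σ p.1).card

/-!
A reduced word `s_l · w` of `σ` is `s_l` followed by a reduced word `w` of `s_l σ`, where the two
values exchanged by `s_l` form an inversion of `σ`. Attach to each state a condition on
permutations (values read in `Fin n`): `H k` forbids a `bca` pattern whose `b` is `k`, `I k`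
forbids an inversion between a value `> k` and a value `≤ k` (so that no reduced word uses
`s_{k+1}`), and the sink admits nothing. Each transition pulls the condition of its target back to
that of its source, and every `σ ≠ 1` satisfying the condition of a state has a descent `s_l` such
that `s_l σ` satisfies the condition of the state reached by `s_l`; induction on the length gives
both directions. The only delicate case is `H k` when every descent of `σ` is `s_k`: then
`k, k + 1, …` occur in increasing positions, so an inversion across `k` already yields a `bca`
pattern with `b = k`.
-/

open Equiv

section Swap

variable {n K : ℕ} {a b : Fin n}

theorem val_swap_apply_of_succ_eq (hab : (a : ℕ) + 1 = b) (v : Fin n) :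
    (swap a b v : ℕ) = if (v : ℕ) = a then b else if (v : ℕ) = b then a else v := by
  rcases eq_or_ne v a with rfl | hva
  · simp
  rcases eq_or_ne v b with rfl | hvb
  · simp [Fin.val_ne_of_ne hva]
  simp [swap_apply_of_ne_of_ne hva hvb, Fin.val_ne_of_ne hva, Fin.val_ne_of_ne hvb]

theorem lt_val_swap_apply_iff (hab : (a : ℕ) + 1 = b) (haK : (a : ℕ) ≠ K) (v : Fin n) :
    K < (swap a b v : ℕ) ↔ K < v := by
  rw [val_swap_apply_of_succ_eq hab]
  split_ifs <;> omega

theorem val_swap_apply_lt_iff (hab : (a : ℕ) + 1 = b) (hbK : (b : ℕ) ≠ K) (v : Fin n) :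
    (swap a b v : ℕ) < K ↔ v < K := by
  rw [val_swap_apply_of_succ_eq hab]
  split_ifs <;> omega

theorem val_swap_apply_eq_iff (hab : (a : ℕ) + 1 = b) (haK : (a : ℕ) ≠ K) (hbK : (b : ℕ) ≠ K)
    (v : Fin n) : (swap a b v : ℕ) = K ↔ v = K := by
  rw [val_swap_apply_of_succ_eq hab]
  split_ifs <;> omega

theorem lt_or_gt_inv_apply (hab : (a : ℕ) + 1 = b) (π : Perm (Fin n)) :
    π⁻¹ a < π⁻¹ b ∨ π⁻¹ b < π⁻¹ a :=
  lt_or_gt_of_ne (π⁻¹.injective.ne (Fin.ne_of_val_ne (by omega)))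

theorem val_lt_of_inv_apply_lt {π : Perm (Fin n)} (h : π⁻¹ a < π⁻¹ b) (x y : Fin n) :
    (π x : ℕ) = a → (π y : ℕ) = b → (x : ℕ) < y := by
  intro hx hy
  rwa [← Fin.val_inj.1 hx, ← Fin.val_inj.1 hy, Perm.coe_inv, symm_apply_apply,
    symm_apply_apply] at h

theorem swap_mul_inv_apply_lt_iff (π : Perm (Fin n)) :
    (swap a b * π)⁻¹ a < (swap a b * π)⁻¹ b ↔ π⁻¹ b < π⁻¹ a := by
  simp [mul_inv_rev, swap_inv]

end Swap

section Inversions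

variable {n : ℕ} {a b : Fin n}

theorem invCount_one : invCount n 1 = 0 :=
  Finset.card_eq_zero.2 (Finset.filter_eq_empty_iff.2 fun _ _ h => lt_asymm h.1 h.2)

theorem invCount_swap_mul_of_lt (hab : (a : ℕ) + 1 = b) {π : Perm (Fin n)}
    (h : π⁻¹ a < π⁻¹ b) : invCount n (swap a b * π) = invCount n π + 1 := by
  have hset : (Finset.univ.filter fun p : Fin n × Fin n =>
        p.1 < p.2 ∧ (swap a b * π) p.2 < (swap a b * π) p.1) =
      insert (π⁻¹ a, π⁻¹ b)
        (Finset.univ.filter fun p : Fin n × Fin n => p.1 < p.2 ∧ π p.2 < π p.1) := by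
    ext ⟨p, q⟩
    simp only [Finset.mem_filter, Finset.mem_univ, true_and, Finset.mem_insert, Prod.mk.injEq,
      Perm.mul_apply, Perm.eq_inv_iff_eq, Fin.lt_def, Fin.ext_iff, val_swap_apply_of_succ_eq hab]
    have := val_lt_of_inv_apply_lt h p q
    have := val_lt_of_inv_apply_lt h q p
    split_ifs <;> omega
  rw [invCount, invCount, hset, Finset.card_insert_of_notMem]
  simp only [Finset.mem_filter, Finset.mem_univ, true_and, Perm.coe_inv, apply_symm_apply,
    not_and, not_lt, Fin.le_def]
  omega

theorem invCount_swap_mul_add_one_of_lt (hab : (a : ℕ) + 1 = b) {π : Perm (Fin n)}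
    (h : π⁻¹ b < π⁻¹ a) : invCount n (swap a b * π) + 1 = invCount n π := by
  simpa [swap_mul_self_mul] using
    (invCount_swap_mul_of_lt hab ((swap_mul_inv_apply_lt_iff π).2 h)).symm

theorem invCount_swap_mul_le (hab : (a : ℕ) + 1 = b) (π : Perm (Fin n)) :
    invCount n (swap a b * π) ≤ invCount n π + 1 := by
  rcases lt_or_gt_inv_apply hab π with h | h
  · exact (invCount_swap_mul_of_lt hab h).le
  · have := invCount_swap_mul_add_one_of_lt hab h
    omega

end Inversions

section ReducedWords

variable {n : ℕ}

def IsReducedWord (n : ℕ) (w : List ℕ) (σ : Perm (Fin n)) : Prop :=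
  (∀ l ∈ w, 1 ≤ l ∧ l ≤ n - 1) ∧ (w.map (adjTransposition n)).prod = σ ∧
    w.length = invCount n σ

theorem adjTransposition_eq_swap {a b : Fin n} (hab : (a : ℕ) + 1 = b) :
    adjTransposition n b = swap a b := by
  rw [adjTransposition, dif_pos ⟨by omega, b.isLt⟩]
  congr 1
  exact Fin.ext (by simp only; omega)

theorem exists_succ_eq_of_letter {l : ℕ} (h : 1 ≤ l ∧ l ≤ n - 1) :
    ∃ a b : Fin n, (a : ℕ) + 1 = b ∧ (b : ℕ) = l :=
  ⟨⟨l - 1, by omega⟩, ⟨l, by omega⟩, by simp only; omega, rfl⟩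

theorem invCount_prod_le_length {w : List ℕ} (hw : ∀ l ∈ w, 1 ≤ l ∧ l ≤ n - 1) :
    invCount n (w.map (adjTransposition n)).prod ≤ w.length := by
  induction w with
  | nil => simp [invCount_one]
  | cons l w ih =>
    obtain ⟨a, b, hab, rfl⟩ := exists_succ_eq_of_letter (hw _ List.mem_cons_self)
    have := invCount_swap_mul_le hab (w.map (adjTransposition n)).prod
    rw [List.map_cons, List.prod_cons, adjTransposition_eq_swap hab, List.length_cons]
    have := ih fun l hl => hw l (List.mem_cons_of_mem _ hl)
    omega

theorem isReducedWord_nil_iff {σ : Perm (Fin n)} : IsReducedWord n [] σ ↔ σ = 1 := by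
  simp only [IsReducedWord, List.not_mem_nil, false_implies, implies_true, List.map_nil,
    List.prod_nil, List.length_nil, true_and, eq_comm (a := (1 : Perm (Fin n)))]
  exact ⟨And.left, fun h => ⟨h, by rw [h, invCount_one]⟩⟩

theorem isReducedWord_cons_iff {a b : Fin n} (hab : (a : ℕ) + 1 = b) {w : List ℕ}
    {π : Perm (Fin n)} :
    IsReducedWord n ((b : ℕ) :: w) π ↔ π⁻¹ b < π⁻¹ a ∧ IsReducedWord n w (swap a b * π) := by
  have hw' : (∀ l ∈ (b : ℕ) :: w, 1 ≤ l ∧ l ≤ n - 1) ↔ ∀ l ∈ w, 1 ≤ l ∧ l ≤ n - 1 := by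
    simp only [List.mem_cons, forall_eq_or_imp, and_iff_right_iff_imp]
    intro; omega
  simp only [IsReducedWord, hw', List.map_cons, List.prod_cons, adjTransposition_eq_swap hab,
    List.length_cons]
  constructor
  · rintro ⟨hw, hprod, hlen⟩
    have hρ : (w.map (adjTransposition n)).prod = swap a b * π := by
      rw [← hprod, swap_mul_self_mul]
    have hle := invCount_prod_le_length hw
    rw [hρ] at hle
    rcases lt_or_gt_inv_apply hab π with h | h
    · have := invCount_swap_mul_of_lt hab h
      omega
    · have := invCount_swap_mul_add_one_of_lt hab h
      exact ⟨h, hw, hρ, by omega⟩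
  · rintro ⟨h, hw, hprod, hlen⟩
    refine ⟨hw, by rw [hprod, swap_mul_self_mul], ?_⟩
    rw [hlen, invCount_swap_mul_add_one_of_lt hab h]

end ReducedWords

section Descents

variable {n : ℕ}

theorem Fin.lt_of_forall_succ_lt {α : Type*} [Preorder α] (f : Fin n → α) {u v : Fin n}
    (huv : u < v) (h : ∀ a b : Fin n, (a : ℕ) + 1 = b → u ≤ a → b ≤ v → f a < f b) :
    f u < f v := by
  obtain ⟨v, hv⟩ := v
  rw [Fin.lt_def] at huv
  induction v with
  | zero => exact absurd huv (Nat.not_lt_zero _)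
  | succ v ih =>
    have hstep : f ⟨v, by omega⟩ < f ⟨v + 1, hv⟩ :=
      h _ _ rfl (Fin.le_def.2 (by simp only at huv ⊢; omega)) le_rfl
    rcases Nat.lt_or_ge (u : ℕ) v with huv' | huv'
    · refine lt_trans (ih (by omega) huv' fun a b hab hua hbv => h a b hab hua ?_) hstep
      exact hbv.trans (Fin.le_def.2 (by simp only; omega))
    · rwa [show u = ⟨v, by omega⟩ from Fin.ext (by simp only at huv ⊢; omega)]

theorem exists_descent_of_ne_one {π : Perm (Fin n)} (hπ : π ≠ 1) :
    ∃ a b : Fin n, (a : ℕ) + 1 = b ∧ π⁻¹ b < π⁻¹ a := by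
  by_contra! hasc
  apply hπ
  have hmono : StrictMono ⇑π⁻¹ := fun u v huv =>
    Fin.lt_of_forall_succ_lt _ huv fun a b hab _ _ =>
      (lt_or_gt_inv_apply hab π).resolve_right (hasc a b hab).not_gt
  rw [← inv_eq_one]
  exact Perm.ext fun x => hmono.apply_eq

end Descents

section Patterns

variable {n K : ℕ} {a b : Fin n}

def HasBCA (n K : ℕ) (σ : Perm (Fin n)) : Prop :=
  ∃ p q r : Fin n, p < q ∧ q < r ∧ (σ p : ℕ) = K ∧ K < (σ q : ℕ) ∧ (σ r : ℕ) < K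

def HasInversionAcross (n K : ℕ) (σ : Perm (Fin n)) : Prop :=
  ∃ x y : Fin n, x < y ∧ K < (σ x : ℕ) ∧ (σ y : ℕ) ≤ K

theorem HasBCA.hasInversionAcross {σ : Perm (Fin n)} (h : HasBCA n K σ) :
    HasInversionAcross n K σ :=
  let ⟨_, q, r, _, hqr, _, hq, hr⟩ := h
  ⟨q, r, hqr, hq, hr.le⟩

theorem hasInversionAcross_swap_mul_iff (hab : (a : ℕ) + 1 = b) (haK : (a : ℕ) ≠ K)
    (τ : Perm (Fin n)) : HasInversionAcross n K (swap a b * τ) ↔ HasInversionAcross n K τ := by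
  simp only [HasInversionAcross, Perm.mul_apply, ← not_lt, lt_val_swap_apply_iff hab haK]

theorem hasBCA_swap_mul_iff (hab : (a : ℕ) + 1 = b) (haK : (a : ℕ) ≠ K) (hbK : (b : ℕ) ≠ K)
    (τ : Perm (Fin n)) : HasBCA n K (swap a b * τ) ↔ HasBCA n K τ := by
  simp only [HasBCA, Perm.mul_apply, lt_val_swap_apply_iff hab haK,
    val_swap_apply_lt_iff hab hbK, val_swap_apply_eq_iff hab haK hbK]

-- As `K` precedes `K + 1` in `τ`, exchanging them moves the `b` of a pattern between `K` and
-- `K + 1` while its `c` and `a` stay on their side of the threshold.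
theorem hasBCA_swap_mul_iff_succ (hab : (a : ℕ) + 1 = b) (haK : (a : ℕ) = K)
    {τ : Perm (Fin n)} (h : τ⁻¹ a < τ⁻¹ b) :
    HasBCA n K (swap a b * τ) ↔ HasBCA n (K + 1) τ := by
  simp only [HasBCA, Perm.mul_apply, val_swap_apply_of_succ_eq hab]
  constructor <;> rintro ⟨p, q, r, hpq, hqr, hp, hq, hr⟩ <;> refine ⟨p, q, r, hpq, hqr, ?_⟩
  all_goals
    have := val_lt_of_inv_apply_lt h q p
    have := val_lt_of_inv_apply_lt h r p
    rw [Fin.lt_def] at hpq hqr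
    split_ifs at * <;> omega

theorem not_hasInversionAcross_of_forall_descent {π : Perm (Fin n)}
    (hdesc : ∀ a b : Fin n, (a : ℕ) + 1 = b → π⁻¹ b < π⁻¹ a → (b : ℕ) = K)
    (hπ : ¬HasBCA n K π) : ¬HasInversionAcross n K π := by
  rintro ⟨x, y, hxy, hx, hy⟩
  let k : Fin n := ⟨K, by omega⟩
  -- With no descent above `K`, the values `K, K + 1, …, π x` occur in increasing positions.
  have hkx : π⁻¹ k < x := by
    have hk : k < π x := Fin.lt_def.2 hx
    simpa using Fin.lt_of_forall_succ_lt (⇑π⁻¹) hk fun a b hab hka _ =>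
      (lt_or_gt_inv_apply hab π).resolve_right fun h => by
        have := hdesc a b hab h
        rw [Fin.le_def] at hka
        simp only [k] at hka
        omega
  rcases hy.lt_or_eq with hy | hy
  · exact hπ ⟨π⁻¹ k, x, y, hkx, hxy, by simp [k], hx, hy⟩
  · have hyk : y = π⁻¹ k := Perm.eq_inv_iff_eq.2 (Fin.ext hy)
    exact (hkx.trans hxy).ne' hyk

end Patterns

section Automaton

variable {n : ℕ}

def Admissible (n : ℕ) : AState → Perm (Fin n) → Prop
  | .H k, σ => ¬HasBCA n k σ
  | .I k, σ => ¬HasInversionAcross n k σ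
  | .sink, _ => False

theorem Admissible.ne_sink {s : AState} {σ : Perm (Fin n)} (h : Admissible n s σ) :
    s ≠ .sink := by
  rintro rfl
  exact h

theorem admissible_one {s : AState} (hs : s ≠ .sink) : Admissible n s 1 := by
  cases s with
  | H k =>
    rintro ⟨p, q, r, hpq, hqr, hp, hq, hr⟩
    simp only [Perm.coe_one, id_eq, Fin.lt_def] at *
    omega
  | I k =>
    rintro ⟨x, y, hxy, hx, hy⟩
    simp only [Perm.coe_one, id_eq, Fin.lt_def] at *
    omega
  | sink => exact hs rfl

theorem Admissible.of_aStep {a b : Fin n} (hab : (a : ℕ) + 1 = b) {s : AState}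
    {τ : Perm (Fin n)} (hτ : τ⁻¹ a < τ⁻¹ b) (h : Admissible n (aStep s b) τ) :
    Admissible n s (swap a b * τ) := by
  cases s with
  | H k =>
    simp only [aStep] at h
    split_ifs at h with hbk hbk'
    · exact fun hk =>
        h ((hasInversionAcross_swap_mul_iff hab (by omega) τ).1 hk.hasInversionAcross)
    · exact (hasBCA_swap_mul_iff_succ hab (by omega) hτ).not.2 h
    · exact (hasBCA_swap_mul_iff hab (by omega) hbk τ).not.2 h
  | I k =>
    simp only [aStep] at h
    split_ifs at h with hbk
    · exact h.elim
    · exact (hasInversionAcross_swap_mul_iff hab (by omega) τ).not.2 h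
  | sink => exact h

theorem Admissible.exists_descent {s : AState} {π : Perm (Fin n)} (h : Admissible n s π)
    (hπ : π ≠ 1) : ∃ a b : Fin n, (a : ℕ) + 1 = b ∧ π⁻¹ b < π⁻¹ a ∧
      Admissible n (aStep s b) (swap a b * π) := by
  cases s with
  | H k =>
    by_cases hdesc : ∃ a b : Fin n, (a : ℕ) + 1 = b ∧ π⁻¹ b < π⁻¹ a ∧ (b : ℕ) ≠ k
    · obtain ⟨a, b, hab, hba, hbk⟩ := hdesc
      refine ⟨a, b, hab, hba, ?_⟩
      simp only [aStep, if_neg hbk]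
      split_ifs with hbk'
      · have hab' := (swap_mul_inv_apply_lt_iff π).2 hba
        rw [← swap_mul_self_mul a b π] at h
        exact (hasBCA_swap_mul_iff_succ hab (by omega) hab').not.1 h
      · exact (hasBCA_swap_mul_iff hab (by omega) hbk π).not.2 h
    · push Not at hdesc
      obtain ⟨a, b, hab, hba⟩ := exists_descent_of_ne_one hπ
      have hbk := hdesc a b hab hba
      refine ⟨a, b, hab, hba, ?_⟩
      simp only [aStep, if_pos hbk]
      exact (hasInversionAcross_swap_mul_iff hab (by omega) π).not.2
        (not_hasInversionAcross_of_forall_descent hdesc h)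
  | I k =>
    obtain ⟨a, b, hab, hba⟩ := exists_descent_of_ne_one hπ
    have hbk : (b : ℕ) ≠ k + 1 := by
      intro hbk
      refine h ⟨π⁻¹ b, π⁻¹ a, hba, ?_, ?_⟩ <;> simp only [Perm.coe_inv, apply_symm_apply] <;> omega
    refine ⟨a, b, hab, hba, ?_⟩
    simp only [aStep, if_neg hbk]
    exact (hasInversionAcross_swap_mul_iff hab (by omega) π).not.2 h
  | sink => exact h.elim

theorem admissible_of_isReducedWord {w : List ℕ} {s : AState} {π : Perm (Fin n)}
    (hw : IsReducedWord n w π) (hs : w.foldl aStep s ≠ .sink) : Admissible n s π := by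
  induction w generalizing s π with
  | nil => rw [isReducedWord_nil_iff.1 hw]; exact admissible_one hs
  | cons l w ih =>
    obtain ⟨a, b, hab, rfl⟩ := exists_succ_eq_of_letter (hw.1 _ List.mem_cons_self)
    obtain ⟨hba, hw'⟩ := (isReducedWord_cons_iff hab).1 hw
    rw [← swap_mul_self_mul a b π]
    exact Admissible.of_aStep hab ((swap_mul_inv_apply_lt_iff π).2 hba) (ih hw' hs)

theorem exists_isReducedWord_of_admissible {s : AState} {π : Perm (Fin n)}
    (h : Admissible n s π) : ∃ w, IsReducedWord n w π ∧ w.foldl aStep s ≠ .sink := by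
  induction hm : invCount n π using Nat.strong_induction_on generalizing s π with
  | _ m ih =>
    by_cases hπ : π = 1
    · exact ⟨[], isReducedWord_nil_iff.2 hπ, h.ne_sink⟩
    obtain ⟨a, b, hab, hba, hadm⟩ := h.exists_descent hπ
    have hlt : invCount n (swap a b * π) < m := by
      have := invCount_swap_mul_add_one_of_lt hab hba
      omega
    obtain ⟨w, hw, hacc⟩ := ih _ hlt hadm rfl
    exact ⟨b :: w, (isReducedWord_cons_iff hab).2 ⟨hba, hw⟩, hacc⟩

theorem exists_isReducedWord_foldl_ne_sink_iff (s : AState) (π : Perm (Fin n)) :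
    (∃ w, IsReducedWord n w π ∧ w.foldl aStep s ≠ .sink) ↔ Admissible n s π :=
  ⟨fun ⟨_, hw, hs⟩ => admissible_of_isReducedWord hw hs, exists_isReducedWord_of_admissible⟩

end Automaton

theorem automaton_Uj_accepts_iff_avoids_jca_general (n j : ℕ) (σ : Equiv.Perm (Fin n)) :
    (∃ w : List ℕ, (∀ l ∈ w, 1 ≤ l ∧ l ≤ n - 1) ∧
        (w.map (adjTransposition n)).prod = σ ∧
        w.length = invCount n σ ∧
        AcceptedByU j w) ↔
      ¬ ∃ p q r : Fin n, p < q ∧ q < r ∧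
          (σ p : ℕ) + 1 = j ∧ j < (σ q : ℕ) + 1 ∧ (σ r : ℕ) + 1 < j := by
  have key := exists_isReducedWord_foldl_ne_sink_iff (.H (j - 1)) σ
  simp only [IsReducedWord, and_assoc] at key
  refine key.trans (not_congr ?_)
  simp only [HasBCA]
  constructor <;> rintro ⟨p, q, r, hpq, hqr, hp, hq, hr⟩ <;>
    exact ⟨p, q, r, hpq, hqr, by omega, by omega, by omega⟩

/-- Fix `n ≥ 3` and `2 ≤ j ≤ n-1`. A permutation `σ` of `{1,…,n}` (a `Fin n`
value `v` encodes the value `v+1 ∈ {1,…,n}`) admits a reduced word accepted by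
the automaton `U(j)` if and only if there are no positions `p < q < r` with
`σ p = j`, `σ q > j` and `σ r < j` (that is, `σ` avoids the pattern `bca`
with `b = j`). A reduced word for `σ` is a word `w` over `{1,…,n-1}` with
`σ = s_{w 1} · s_{w 2} ⋯ s_{w k}` (product with composition convention
`(f·g)(x) = f (g x)`) whose length is the number of inversions of `σ`. -/
theorem automaton_Uj_accepts_iff_avoids_jca (n j : ℕ)
    (hn : 3 ≤ n) (hj1 : 2 ≤ j) (hj2 : j ≤ n - 1) (σ : Equiv.Perm (Fin n)) :
    (∃ w : List ℕ, (∀ l ∈ w, 1 ≤ l ∧ l ≤ n - 1) ∧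
        (w.map (adjTransposition n)).prod = σ ∧
        w.length = invCount n σ ∧
        AcceptedByU j w) ↔
      ¬ ∃ p q r : Fin n, p < q ∧ q < r ∧
          (σ p : ℕ) + 1 = j ∧ j < (σ q : ℕ) + 1 ∧ (σ r : ℕ) + 1 < j :=
  automaton_Uj_accepts_iff_avoids_jca_general n j σ
end

section
/- Fix n ≥ 1 and nonnegative integers s(2),…,s(n). The set of s-inversion functions, ordered componentwise (g ≤ h iff g(c,a) ≤ h(c,a) for all 1 ≤ a < c ≤ n), is a lattice: every pair of s-inversion functions has a least upper bound and a greatest lower bound within the set of s-inversion functions. (This poset is the s-weak order on s-decreasing trees.) -/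
/-- `g` is an `s`-inversion function (values encoded on `Fin n`, where the
index `i` stands for the value `i+1`, so the pairs `(c,a)` with `1 ≤ a < c ≤ n`
are the pairs of indices `a < c`): `0 ≤ g c a ≤ s c` on such pairs, `g` is
transitive (`a < b < c` and `g b a > 0` imply `g c a ≥ g c b`) and planar
(`a < b < c` and `g b a < s b` imply `g c b ≥ g c a`). -/
def IsSInvFun (n : ℕ) (s : Fin n → ℕ) (g : Fin n → Fin n → ℕ) : Prop :=
  (∀ a c : Fin n, a < c → g c a ≤ s c) ∧
  (∀ a b c : Fin n, a < b → b < c → 0 < g b a → g c b ≤ g c a) ∧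
  (∀ a b c : Fin n, a < b → b < c → g b a < s b → g c a ≤ g c b)

/-- The componentwise order on `s`-inversion functions (the `s`-weak order):
`g ≤ h` iff `g c a ≤ h c a` for all pairs `a < c`. -/
def SLe (n : ℕ) (g h : Fin n → Fin n → ℕ) : Prop :=
  ∀ a c : Fin n, a < c → g c a ≤ h c a

namespace SWeakAux

variable {n : ℕ}

/-- Reachability via positive steps of `q`. -/
inductive Reach (q : Fin n → Fin n → ℕ) : Fin n → Fin n → Prop
  | refl (a : Fin n) : Reach q a a
  | step {a b c : Fin n} : Reach q a b → b < c → 0 < q c b → Reach q a c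

lemma Reach.le' {q : Fin n → Fin n → ℕ} {a b : Fin n} (h : Reach q a b) : a ≤ b := by
  induction h with
  | refl => exact le_refl _
  | step h1 h2 h3 ih => exact le_of_lt (lt_of_le_of_lt ih h2)

lemma Reach.trans' {q : Fin n → Fin n → ℕ} {a b c : Fin n}
    (h1 : Reach q a b) (h2 : Reach q b c) : Reach q a c := by
  induction h2 with
  | refl => exact h1
  | step hr hlt hpos ih => exact Reach.step ih hlt hpos

open Classical in
/-- The transitive closure / join function. -/
noncomputable def joinFun (q : Fin n → Fin n → ℕ) (c a : Fin n) : ℕ :=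
  (Finset.univ.filter fun b => Reach q a b ∧ b < c).sup (q c)

lemma le_joinFun {q : Fin n → Fin n → ℕ} {a b c : Fin n}
    (hr : Reach q a b) (hlt : b < c) : q c b ≤ joinFun q c a := by
  classical
  apply Finset.le_sup
  simp only [Finset.mem_filter, Finset.mem_univ, true_and]
  exact ⟨hr, hlt⟩

lemma joinFun_le {q : Fin n → Fin n → ℕ} {a c : Fin n} {x : ℕ}
    (h : ∀ b, Reach q a b → b < c → q c b ≤ x) : joinFun q c a ≤ x := by
  classical
  apply Finset.sup_le
  intro b hb
  simp only [Finset.mem_filter, Finset.mem_univ, true_and] at hb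
  exact h b hb.1 hb.2

lemma joinFun_pos {q : Fin n → Fin n → ℕ} {a c : Fin n}
    (h : 0 < joinFun q c a) : ∃ b, Reach q a b ∧ b < c ∧ 0 < q c b := by
  classical
  rw [joinFun, Finset.lt_sup_iff] at h
  obtain ⟨b, hb, hpos⟩ := h
  simp only [Finset.mem_filter, Finset.mem_univ, true_and] at hb
  exact ⟨b, hb.1, hb.2, hpos⟩

/-- Key crossing lemma: if everything reachable from `a` below `b` has
small `q b`-value, then anything reachable from `a` is either below `b` or
reachable from `b`. -/
lemma reach_cross {q : Fin n → Fin n → ℕ} {s : Fin n → ℕ} {a b d : Fin n}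
    (hP : ∀ a' b' c' : Fin n, a' < b' → b' < c' → q b' a' < s b' → 0 < q c' a' → 0 < q c' b')
    (ha : ∀ d', Reach q a d' → d' < b → q b d' < s b)
    (hab : a < b) (hr : Reach q a d) : Reach q b d ∨ d < b := by
  induction hr with
  | refl => exact Or.inr hab
  | @step y z hr1 hlt hpos ih =>
    rcases ih with ih | ih
    · exact Or.inl (Reach.step ih hlt hpos)
    · rcases lt_trichotomy z b with hz | hz | hz
      · exact Or.inr hz
      · exact Or.inl (by rw [hz]; exact Reach.refl b)
      · -- y < b < z, q z y > 0, q b y < s b  ⇒  q z b > 0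
        have hsm : q b y < s b := ha y hr1 ih
        have : 0 < q z b := hP y b z ih hz hsm hpos
        exact Or.inl (Reach.step (Reach.refl b) hz this)

/-- The join of two `s`-inversion functions. -/
lemma join_is_lub {s : Fin n → ℕ} {g h : Fin n → Fin n → ℕ}
    (hg : IsSInvFun n s g) (hh : IsSInvFun n s h) :
    ∃ jn : Fin n → Fin n → ℕ, IsSInvFun n s jn ∧ SLe n g jn ∧ SLe n h jn ∧
      ∀ u : Fin n → Fin n → ℕ, IsSInvFun n s u → SLe n g u → SLe n h u →
        SLe n jn u := by
  obtain ⟨hgb, hgt, hgp⟩ := hg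
  obtain ⟨hhb, hht, hhp⟩ := hh
  set q : Fin n → Fin n → ℕ := fun c a => max (g c a) (h c a) with hq
  -- basic facts about q
  have hql : ∀ c a : Fin n, g c a ≤ q c a := by intro c a; simp only [hq]; omega
  have hqr : ∀ c a : Fin n, h c a ≤ q c a := by intro c a; simp only [hq]; omega
  have hqle : ∀ (c a : Fin n) (x : ℕ), g c a ≤ x → h c a ≤ x → q c a ≤ x := by
    intro c a x h1 h2; simp only [hq]; omega
  have hqpos : ∀ c a : Fin n, 0 < q c a → 0 < g c a ∨ 0 < h c a := by
    intro c a hp; simp only [hq] at hp; omega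
  have hqlt : ∀ (c a : Fin n) (x : ℕ), q c a < x → g c a < x ∧ h c a < x := by
    intro c a x hp; simp only [hq] at hp; omega
  -- weak planarity of q
  have hP : ∀ a' b' c' : Fin n, a' < b' → b' < c' → q b' a' < s b' → 0 < q c' a' →
      0 < q c' b' := by
    intro a' b' c' h1 h2 hsm hpos
    obtain ⟨hgs, hhs⟩ := hqlt b' a' (s b') hsm
    rcases hqpos c' a' hpos with hc | hc
    · exact lt_of_lt_of_le (lt_of_lt_of_le hc (hgp a' b' c' h1 h2 hgs)) (hql c' b')
    · exact lt_of_lt_of_le (lt_of_lt_of_le hc (hhp a' b' c' h1 h2 hhs)) (hqr c' b')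
  refine ⟨joinFun q, ⟨?_, ?_, ?_⟩, ?_, ?_, ?_⟩
  · -- bound: joinFun q c a ≤ s c
    intro a c hac
    apply joinFun_le
    intro b hr hlt
    exact hqle c b (s c) (hgb b c hlt) (hhb b c hlt)
  · -- transitivity
    intro a b c hab hbc hpos
    obtain ⟨b', hr', hlt', hpos'⟩ := joinFun_pos hpos
    have hrb : Reach q a b := Reach.step hr' hlt' hpos'
    apply joinFun_le
    intro d hr hlt
    exact le_joinFun (hrb.trans' hr) hlt
  · -- planarity
    intro a b c hab hbc hsm
    have ha : ∀ d', Reach q a d' → d' < b → q b d' < s b := by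
      intro d' hr hlt
      exact lt_of_le_of_lt (le_joinFun hr hlt) hsm
    apply joinFun_le
    intro d hr hlt
    rcases reach_cross hP ha hab hr with hcase | hcase
    · exact le_joinFun hcase hlt
    · -- d < b : use planarity of g and h
      obtain ⟨hgs, hhs⟩ := hqlt b d (s b) (ha d hr hcase)
      have h1 := hgp d b c hcase hbc hgs
      have h2 := hhp d b c hcase hbc hhs
      have : q c d ≤ q c b :=
        hqle c d _ (le_trans h1 (hql c b)) (le_trans h2 (hqr c b))
      exact le_trans this (le_joinFun (Reach.refl b) hbc)
  · -- g ≤ jn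
    intro a c hac
    exact le_trans (hql c a) (le_joinFun (Reach.refl a) hac)
  · -- h ≤ jn
    intro a c hac
    exact le_trans (hqr c a) (le_joinFun (Reach.refl a) hac)
  · -- least upper bound
    intro u hu hgu hhu
    obtain ⟨hub, hut, hup⟩ := hu
    intro a c hac
    apply joinFun_le
    intro b hr hlt
    have key : ∀ d, Reach q a d → d < c → u c d ≤ u c a := by
      intro d hr'
      induction hr' with
      | refl => intro _; exact le_refl _
      | @step y z hr1 hlt1 hpos1 ih =>
        intro hzc
        have hyc : y < c := lt_trans hlt1 hzc
        have hupos : 0 < u z y := by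
          rcases hqpos z y hpos1 with hc | hc
          · exact lt_of_lt_of_le hc (hgu y z hlt1)
          · exact lt_of_lt_of_le hc (hhu y z hlt1)
        exact le_trans (hut y z c hlt1 hzc hupos) (ih hyc)
    have hub' : q c b ≤ u c b := hqle c b _ (hgu b c hlt) (hhu b c hlt)
    exact le_trans hub' (key b hr hlt)

/-- Complement of an inversion function. -/
lemma comp_inv {s : Fin n → ℕ} {g : Fin n → Fin n → ℕ} (hg : IsSInvFun n s g) :
    IsSInvFun n s (fun c a => s c - g c a) := by
  obtain ⟨hb, ht, hp⟩ := hg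
  refine ⟨fun a c _ => Nat.sub_le _ _, ?_, ?_⟩
  · intro a b c hab hbc hpos
    dsimp only at hpos ⊢
    have h1 : g b a < s b := by omega
    have h2 := hp a b c hab hbc h1
    omega
  · intro a b c hab hbc hsm
    dsimp only at hsm ⊢
    have h1 : 0 < g b a := by omega
    have h2 := ht a b c hab hbc h1
    omega

end SWeakAux

/-- The `s`-weak order is a lattice: every pair of `s`-inversion functions has
a greatest lower bound and a least upper bound within the set of `s`-inversion
functions, ordered componentwise. -/
theorem s_weak_order_is_lattice (n : ℕ) (hn : 1 ≤ n) (s : Fin n → ℕ)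
    (g h : Fin n → Fin n → ℕ) (hg : IsSInvFun n s g) (hh : IsSInvFun n s h) :
    (∃ m : Fin n → Fin n → ℕ, IsSInvFun n s m ∧ SLe n m g ∧ SLe n m h ∧
      ∀ u : Fin n → Fin n → ℕ, IsSInvFun n s u → SLe n u g → SLe n u h →
        SLe n u m) ∧
    (∃ jn : Fin n → Fin n → ℕ, IsSInvFun n s jn ∧ SLe n g jn ∧ SLe n h jn ∧
      ∀ u : Fin n → Fin n → ℕ, IsSInvFun n s u → SLe n g u → SLe n h u →
        SLe n jn u) := by
  constructor
  · -- meet via complement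
    obtain ⟨jn', hjn', hgj, hhj, hlub⟩ :=
      SWeakAux.join_is_lub (SWeakAux.comp_inv hg) (SWeakAux.comp_inv hh)
    refine ⟨fun c a => s c - jn' c a, SWeakAux.comp_inv hjn', ?_, ?_, ?_⟩
    · intro a c hac
      have h1 := hgj a c hac
      have h2 := hg.1 a c hac
      dsimp only at h1 ⊢
      omega
    · intro a c hac
      have h1 := hhj a c hac
      have h2 := hh.1 a c hac
      dsimp only at h1 ⊢
      omega
    · intro u hu hug huh a c hac
      have hule : SLe n jn' (fun c a => s c - u c a) := by
        apply hlub _ (SWeakAux.comp_inv hu)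
        · intro a' c' hac'
          have := hug a' c' hac'
          dsimp only
          omega
        · intro a' c' hac'
          have := huh a' c' hac'
          dsimp only
          omega
      have h1 := hule a c hac
      have h2 := hu.1 a c hac
      dsimp only at h1 ⊢
      omega
  · exact SWeakAux.join_is_lub hg hh
end
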